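/- arXiv:1202.3870 — 6 statements merged into one kernel-verified Lean document; each statement's English description precedes it below -/
import Mathlib

section
/- Let E be a Banach space, p ∈ (1,∞), μ ∈ (1/p,1], and let T > 0 be finite. There exist a constant C = C(p,μ,T) and a linear map Ext from W^1_{p,μ}((0,T);E) to W^1_{p,μ}((0,∞);E) such that (Ext u)(t) = u(t) for all t ∈ (0,T) and ‖Ext u‖_{W^1_{p,μ}((0,∞);E)} ≤ C ‖u‖_{W^1_{p,μ}((0,T);E)} for all u ∈ W^1_{p,μ}((0,T);E). -/
open MeasureTheory Set Filter Topology
open scoped ENNReal NNReal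

noncomputable section

/-- The interval `(0,T)` for `T ∈ (0,∞]`. -/
def Iset (T : ℝ≥0∞) : Set ℝ := {t : ℝ | 0 < t ∧ ENNReal.ofReal t < T}

/-- The `p`-th power of the `L_{p,μ}(I;E)` norm of `f`. -/
def wInt (p μ : ℝ) (I : Set ℝ) {E : Type*} [NormedAddCommGroup E] (f : ℝ → E) : ℝ≥0∞ :=
  ∫⁻ t in I, ENNReal.ofReal (t ^ (p * (1 - μ)) * ‖f t‖ ^ p)

/-- The norm of `L_{p,μ}(I;E)`. -/
def wNorm (p μ : ℝ) (I : Set ℝ) {E : Type*} [NormedAddCommGroup E] (f : ℝ → E) : ℝ≥0∞ :=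
  (wInt p μ I f) ^ (1 / p)

/-- Membership in `L_{p,μ}(I;E)`. -/
def MemWLp (p μ : ℝ) (I : Set ℝ) {E : Type*} [NormedAddCommGroup E] (f : ℝ → E) : Prop :=
  AEStronglyMeasurable f (MeasureTheory.volume.restrict I) ∧ wInt p μ I f < ⊤

/-- `u` is locally absolutely continuous on the interval `I` with a.e. derivative `u'`,
expressed via the fundamental theorem of calculus. -/
def LocAC (I : Set ℝ) {E : Type*} [NormedAddCommGroup E] [NormedSpace ℝ E] (u u' : ℝ → E) : Prop :=
  ∀ a b : ℝ, a ∈ I → b ∈ I → a ≤ b →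
    IntegrableOn u' (Ioo a b) ∧ u b - u a = ∫ t in Ioo a b, u' t

/-- Membership in the weighted Sobolev space `W^1_{p,μ}(I;E)`. -/
def MemW1 (p μ : ℝ) (I : Set ℝ) {E : Type*} [NormedAddCommGroup E] [NormedSpace ℝ E]
    (u u' : ℝ → E) : Prop :=
  MemWLp p μ I u ∧ MemWLp p μ I u' ∧ LocAC I u u'

/-!
Extend `u` beyond `T` by its left limit `u(T⁻)`, damped linearly to `0` on `[T, 2T]`. Away from `0`
the weight is bounded below, so `u'` is integrable on `(a, T)` for every `a > 0`; hence the limit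
`u(T⁻) = u(a) + ∫_a^T u'` exists, and averaging this identity over `a ∈ (T/2, T)` and applying
Hölder's inequality bounds `‖u(T⁻)‖^p` by the `W^1_{p,μ}` norm of `u`. On `[T, 2T]` the weight is
bounded above, so the ramp and its derivative cost a multiple of `‖u(T⁻)‖^p`. To obtain an operator
that is linear on all functions, `u ↦ u(T⁻)` is replaced by a linear functional on `ℝ → E` that agrees
with the left limit wherever it exists.
-/

theorem exists_linearMap_eq_of_tendsto {α 𝕜 F : Type*} [Field 𝕜] [AddCommGroup F] [Module 𝕜 F]
    [TopologicalSpace F] [T2Space F] [ContinuousAdd F] [ContinuousConstSMul 𝕜 F]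
    (l : Filter α) [l.NeBot] :
    ∃ Λ : (α → F) →ₗ[𝕜] F, ∀ u L, Tendsto u l (𝓝 L) → Λ u = L := by
  let S : Submodule 𝕜 (α → F) :=
    { carrier := {u | ∃ L, Tendsto u l (𝓝 L)}
      add_mem' := fun ⟨L, hL⟩ ⟨M, hM⟩ => ⟨L + M, hL.add hM⟩
      zero_mem' := ⟨0, tendsto_const_nhds⟩
      smul_mem' := fun c _ ⟨L, hL⟩ => ⟨c • L, hL.const_smul c⟩ }
  let limit : S →ₗ[𝕜] F :=
    { toFun := fun u => limUnder l u.1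
      map_add' := fun ⟨_, L, hL⟩ ⟨_, M, hM⟩ => by
        simp only [Submodule.coe_add, hL.limUnder_eq, hM.limUnder_eq]
        exact (hL.add hM).limUnder_eq
      map_smul' := fun c ⟨_, L, hL⟩ => by
        simp only [SetLike.val_smul, hL.limUnder_eq, RingHom.id_apply]
        exact (hL.const_smul c).limUnder_eq }
  obtain ⟨Λ, hΛ⟩ := limit.exists_extend
  exact ⟨Λ, fun u L hL => (LinearMap.congr_fun hΛ ⟨u, L, hL⟩).trans hL.limUnder_eq⟩

lemma rpow_one_div_le_ofReal_mul_of_le_mul {p : ℝ} (hp : 0 < p) {x y : ℝ≥0∞} {C : ℝ≥0}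
    (h : x ≤ C * y) : x ^ (1 / p) ≤ ENNReal.ofReal ((C : ℝ) ^ (1 / p)) * y ^ (1 / p) := by
  rw [← ENNReal.ofReal_rpow_of_nonneg C.coe_nonneg (by positivity), ENNReal.ofReal_coe_nnreal,
    ← ENNReal.mul_rpow_of_nonneg _ _ (by positivity)]
  exact ENNReal.rpow_le_rpow h (by positivity)

section Weighted

variable {E : Type*} [NormedAddCommGroup E] {p μ : ℝ}

lemma wInt_eq_lintegral_enorm (hp : 0 ≤ p) (I : Set ℝ) (f : ℝ → E) :
    wInt p μ I f = ∫⁻ t in I, ENNReal.ofReal (t ^ (p * (1 - μ))) * ‖f t‖ₑ ^ p := by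
  refine lintegral_congr fun t => ?_
  rw [ENNReal.ofReal_mul' (by positivity), ← ofReal_norm,
    ENNReal.ofReal_rpow_of_nonneg (norm_nonneg _) hp]

lemma setLIntegral_enorm_rpow_le_wInt (hp : 0 ≤ p) (hμ1 : μ ≤ 1) {c : ℝ} (hc : 0 < c) (T : ℝ)
    (f : ℝ → E) :
    ∫⁻ t in Ioo c T, ‖f t‖ₑ ^ p ≤
      ENNReal.ofReal (c ^ (-(p * (1 - μ)))) * wInt p μ (Ioo 0 T) f := by
  have he : 0 ≤ p * (1 - μ) := mul_nonneg hp (by linarith)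
  rw [wInt_eq_lintegral_enorm hp, ← lintegral_const_mul' _ _ ENNReal.ofReal_ne_top]
  calc ∫⁻ t in Ioo c T, ‖f t‖ₑ ^ p
      ≤ ∫⁻ t in Ioo c T, ENNReal.ofReal (c ^ (-(p * (1 - μ)))) *
          (ENNReal.ofReal (t ^ (p * (1 - μ))) * ‖f t‖ₑ ^ p) := by
        refine setLIntegral_mono' measurableSet_Ioo fun t ht => ?_
        rw [← mul_assoc, ← ENNReal.ofReal_mul (by positivity), Real.rpow_neg hc.le,
          ← div_eq_inv_mul, ← Real.div_rpow (hc.trans ht.1).le hc.le]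
        refine le_mul_of_one_le_left' (ENNReal.one_le_ofReal.2 ?_)
        exact Real.one_le_rpow ((one_le_div hc).2 ht.1.le) he
    _ ≤ _ := lintegral_mono_set (Ioo_subset_Ioo_left hc.le)

lemma rpow_lintegral_enorm_le {α : Type*} [MeasurableSpace α] {ν : Measure α} (hp : 1 ≤ p)
    {f : α → E} (hf : AEStronglyMeasurable f ν) :
    (∫⁻ x, ‖f x‖ₑ ∂ν) ^ p ≤ ν univ ^ (p - 1) * ∫⁻ x, ‖f x‖ₑ ^ p ∂ν := by
  have h := eLpNorm'_le_eLpNorm'_mul_rpow_measure_univ zero_lt_one hp hf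
  simp only [eLpNorm'_eq_lintegral_enorm, ENNReal.rpow_one, div_one] at h
  calc (∫⁻ x, ‖f x‖ₑ ∂ν) ^ p
      ≤ ((∫⁻ x, ‖f x‖ₑ ^ p ∂ν) ^ (1 / p) * ν univ ^ (1 - 1 / p)) ^ p :=
        ENNReal.rpow_le_rpow h (by linarith)
    _ = ν univ ^ (p - 1) * ∫⁻ x, ‖f x‖ₑ ^ p ∂ν := by
        have hp0 : p ≠ 0 := by positivity
        rw [ENNReal.mul_rpow_of_nonneg _ _ (by linarith), ← ENNReal.rpow_mul, ← ENNReal.rpow_mul,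
          one_div_mul_cancel hp0, ENNReal.rpow_one, sub_mul, one_div_mul_cancel hp0, one_mul,
          mul_comm]

lemma rpow_setLIntegral_enorm_le_wInt (hp : 1 ≤ p) (hμ1 : μ ≤ 1) {c T : ℝ} (hc : 0 < c)
    {f : ℝ → E} (hf : AEStronglyMeasurable f (volume.restrict (Ioo 0 T))) :
    (∫⁻ t in Ioo c T, ‖f t‖ₑ) ^ p ≤
      ENNReal.ofReal (T - c) ^ (p - 1) * ENNReal.ofReal (c ^ (-(p * (1 - μ)))) *
        wInt p μ (Ioo 0 T) f := by
  have hf' : AEStronglyMeasurable f (volume.restrict (Ioo c T)) :=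
    hf.mono_measure (Measure.restrict_mono (Ioo_subset_Ioo_left hc.le) le_rfl)
  calc (∫⁻ t in Ioo c T, ‖f t‖ₑ) ^ p
      ≤ volume (Ioo c T) ^ (p - 1) * ∫⁻ t in Ioo c T, ‖f t‖ₑ ^ p := by
        simpa only [Measure.restrict_apply_univ] using rpow_lintegral_enorm_le hp hf'
    _ ≤ _ := by
        rw [Real.volume_Ioo, mul_assoc]
        gcongr
        exact setLIntegral_enorm_rpow_le_wInt (by linarith) hμ1 hc T f

lemma MemWLp.integrableOn_Ioo (hp : 1 ≤ p) (hμ1 : μ ≤ 1) {c T : ℝ} {f : ℝ → E}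
    (hf : MemWLp p μ (Ioo 0 T) f) (hc : 0 < c) : IntegrableOn f (Ioo c T) := by
  refine ⟨hf.1.mono_measure (Measure.restrict_mono (Ioo_subset_Ioo_left hc.le) le_rfl), ?_⟩
  rw [HasFiniteIntegral, ← ENNReal.rpow_lt_top_iff_of_pos (by linarith : 0 < p)]
  refine (rpow_setLIntegral_enorm_le_wInt hp hμ1 hc hf.1).trans_lt ?_
  exact ENNReal.mul_lt_top (by finiteness) hf.2

lemma wInt_Ici_le (hp : 0 < p) (hμ1 : μ ≤ 1) {a b : ℝ} (ha : 0 ≤ a) {g : ℝ → E} {C : ℝ≥0∞}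
    (hg : ∀ t ∈ Ici a, ‖g t‖ₑ ≤ C) (hg0 : ∀ t ∈ Ici b, g t = 0) :
    wInt p μ (Ici a) g ≤
      ENNReal.ofReal (b ^ (p * (1 - μ))) * ENNReal.ofReal (b - a) * C ^ p := by
  have he : 0 ≤ p * (1 - μ) := mul_nonneg hp.le (by linarith)
  rw [wInt_eq_lintegral_enorm hp.le]
  calc ∫⁻ t in Ici a, ENNReal.ofReal (t ^ (p * (1 - μ))) * ‖g t‖ₑ ^ p
      ≤ ∫⁻ t in Ici a,
          (Iio b).indicator (fun _ => ENNReal.ofReal (b ^ (p * (1 - μ))) * C ^ p) t := by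
        refine setLIntegral_mono' measurableSet_Ici fun t ht => ?_
        by_cases htb : t < b
        · rw [indicator_of_mem (show t ∈ Iio b from htb)]
          gcongr
          · exact ha.trans ht
          · exact hg t ht
        · rw [hg0 t (not_lt.1 htb), enorm_zero, ENNReal.zero_rpow_of_pos hp, mul_zero]
          exact zero_le
    _ = _ := by
        rw [lintegral_indicator_const measurableSet_Iio, Measure.restrict_apply measurableSet_Iio,
          inter_comm, Ici_inter_Iio, Real.volume_Ico]
        ring

lemma wInt_piecewise_Iio {T : ℝ} (hT : 0 < T) (u g : ℝ → E) :
    wInt p μ (Ioi 0) ((Iio T).piecewise u g) = wInt p μ (Ioo 0 T) u + wInt p μ (Ici T) g := by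
  rw [wInt, ← Ioo_union_Ici_eq_Ioi hT,
    lintegral_union measurableSet_Ici (disjoint_left.2 fun t ht ht' => not_le.2 ht.2 ht')]
  congr 1
  · exact setLIntegral_congr_fun measurableSet_Ioo fun t ht => by
      rw [piecewise_eq_of_mem _ _ _ (show t ∈ Iio T from ht.2)]
  · exact setLIntegral_congr_fun measurableSet_Ici fun t ht => by
      rw [piecewise_eq_of_notMem _ _ _ (show t ∉ Iio T from not_lt.2 (mem_Ici.1 ht))]

lemma MeasureTheory.AEStronglyMeasurable.piecewise_Iio {T : ℝ} {u g : ℝ → E}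
    (hu : AEStronglyMeasurable u (volume.restrict (Ioo 0 T))) (hg : AEStronglyMeasurable g) :
    AEStronglyMeasurable ((Iio T).piecewise u g) (volume.restrict (Ioi 0)) := by
  refine .piecewise measurableSet_Iio ?_ hg.restrict.restrict
  rwa [Measure.restrict_restrict measurableSet_Iio, inter_comm, Ioi_inter_Iio]

end Weighted

section

variable {E : Type*} [NormedAddCommGroup E] [NormedSpace ℝ E]

lemma LocAC.congr {I : Set ℝ} [I.OrdConnected] {u u' v v' : ℝ → E} (h : LocAC I u u')
    (hv : EqOn v u I) (hv' : EqOn v' u' I) : LocAC I v v' := by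
  intro a b ha hb hab
  have hsub : Ioo a b ⊆ I := Ioo_subset_Icc_self.trans (Set.OrdConnected.out ‹_› ha hb)
  obtain ⟨hint, hFTC⟩ := h a b ha hb hab
  refine ⟨hint.congr_fun (hv'.mono hsub).symm measurableSet_Ioo, ?_⟩
  rw [hv ha, hv hb, hFTC]
  exact (setIntegral_congr_fun measurableSet_Ioo (hv'.mono hsub)).symm

lemma LocAC.Ioc_of_Ioo {c T : ℝ} {f f' : ℝ → E} (h : LocAC (Ioo c T) f f')
    (hT : ∀ a ∈ Ioo c T, IntegrableOn f' (Ioo a T) ∧ f T - f a = ∫ t in Ioo a T, f' t) :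
    LocAC (Ioc c T) f f' := by
  intro a b ha hb hab
  rcases hb.2.lt_or_eq with hbT | rfl
  · exact h a b ⟨ha.1, hab.trans_lt hbT⟩ ⟨hb.1, hbT⟩ hab
  rcases hab.lt_or_eq with hab | rfl
  · exact hT a ⟨ha.1, hab⟩
  · simp

lemma LocAC.union_Ici {c T : ℝ} {f f' : ℝ → E} (h₁ : LocAC (Ioc c T) f f')
    (h₂ : LocAC (Ici T) f f') : LocAC (Ioi c) f f' := by
  intro a b ha hb hab
  rcases le_or_gt b T with hbT | hTb
  · exact h₁ a b ⟨ha, hab.trans hbT⟩ ⟨hb, hbT⟩ hab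
  rcases le_or_gt T a with hTa | haT
  · exact h₂ a b hTa (hTa.trans hab) hab
  obtain ⟨hint₁, hFTC₁⟩ := h₁ a T ⟨ha, haT.le⟩ ⟨ha.trans haT, le_rfl⟩ haT.le
  obtain ⟨hint₂, hFTC₂⟩ := h₂ T b self_mem_Ici hTb.le hTb.le
  rw [← integrableOn_Ico_iff_integrableOn_Ioo] at hint₂
  have hdisj : Disjoint (Ioo a T) (Ico T b) := disjoint_left.2 fun t ht ht' => not_le.2 ht.2 ht'.1
  rw [← Ioo_union_Ico_eq_Ioo haT hTb.le]
  refine ⟨hint₁.union hint₂, ?_⟩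
  rw [setIntegral_union hdisj measurableSet_Ico hint₁ hint₂, integral_Ico_eq_integral_Ioo,
    ← hFTC₁, ← hFTC₂]
  abel

lemma LocAC.piecewise_Iio {c T : ℝ} {u u' g g' : ℝ → E} (hu : LocAC (Ioo c T) u u')
    (hg : LocAC (Ici T) g g')
    (hend : ∀ a ∈ Ioo c T, IntegrableOn u' (Ioo a T) ∧ u a + ∫ t in Ioo a T, u' t = g T) :
    LocAC (Ioi c) ((Iio T).piecewise u g) ((Iio T).piecewise u' g') := by
  have hIoo {v w : ℝ → E} : EqOn ((Iio T).piecewise v w) v (Ioo c T) :=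
    fun t ht => piecewise_eq_of_mem _ _ _ (show t ∈ Iio T from ht.2)
  have hIci {v w : ℝ → E} : EqOn ((Iio T).piecewise v w) w (Ici T) :=
    fun t ht => piecewise_eq_of_notMem _ _ _ (show t ∉ Iio T from not_lt.2 (mem_Ici.1 ht))
  refine ((hu.congr hIoo hIoo).Ioc_of_Ioo fun a ha => ?_).union_Ici (hg.congr hIci hIci)
  obtain ⟨hint, hval⟩ := hend a ha
  have hEq : EqOn ((Iio T).piecewise u' g') u' (Ioo a T) :=
    hIoo.mono (Ioo_subset_Ioo_left ha.1.le)
  refine ⟨hint.congr_fun hEq.symm measurableSet_Ioo, ?_⟩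
  rw [hIci self_mem_Ici, hIoo ha, setIntegral_congr_fun measurableSet_Ioo hEq, ← hval]
  abel

lemma LocAC.tendsto_nhdsLT {c T a : ℝ} {u u' : ℝ → E} (hu : LocAC (Ioo c T) u u')
    (ha : a ∈ Ioo c T) (hint : IntegrableOn u' (Ioo a T)) :
    Tendsto u (𝓝[<] T) (𝓝 (u a + ∫ t in Ioo a T, u' t)) := by
  have hprim : ContinuousWithinAt (fun x => ∫ t in Ioc a x, u' t) (Icc a T) T :=
    (intervalIntegral.continuousOn_primitive
      ((integrableOn_Icc_iff_integrableOn_Ioo).2 hint)).continuousWithinAt ⟨ha.2.le, le_rfl⟩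
  have hlim : Tendsto (fun x => u a + ∫ t in Ioc a x, u' t) (𝓝[<] T)
      (𝓝 (u a + ∫ t in Ioo a T, u' t)) := by
    rw [← integral_Ioc_eq_integral_Ioo]
    refine tendsto_const_nhds.add (hprim.mono_left ?_)
    rw [← nhdsWithin_Ioo_eq_nhdsLT ha.2]
    exact nhdsWithin_mono _ Ioo_subset_Icc_self
  refine hlim.congr' ?_
  filter_upwards [Ioo_mem_nhdsLT ha.2] with x hx
  rw [integral_Ioc_eq_integral_Ioo, ← (hu a x ha ⟨ha.1.trans hx.1, hx.2⟩ hx.1.le).2]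
  abel

lemma MemW1.exists_tendsto_nhdsLT {p μ T : ℝ} (hp : 1 ≤ p) (hμ1 : μ ≤ 1) (hT : 0 < T)
    {u u' : ℝ → E} (hu : MemW1 p μ (Ioo 0 T) u u') :
    ∃ L, Tendsto u (𝓝[<] T) (𝓝 L) ∧
      ∀ a ∈ Ioo 0 T, IntegrableOn u' (Ioo a T) ∧ u a + ∫ t in Ioo a T, u' t = L := by
  have hint (a : ℝ) (ha : a ∈ Ioo 0 T) : IntegrableOn u' (Ioo a T) :=
    hu.2.1.integrableOn_Ioo hp hμ1 ha.1
  have hmid : T / 2 ∈ Ioo 0 T := ⟨half_pos hT, half_lt_self hT⟩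
  have hlim := hu.2.2.tendsto_nhdsLT hmid (hint _ hmid)
  exact ⟨_, hlim, fun a ha =>
    ⟨hint a ha, tendsto_nhds_unique (hu.2.2.tendsto_nhdsLT ha (hint a ha)) hlim⟩⟩

lemma enorm_le_of_forall_add_integral_eq {c T : ℝ} (hcT : c < T) {u u' : ℝ → E} {L : E}
    (h : ∀ a ∈ Ioo c T, u a + ∫ t in Ioo a T, u' t = L) :
    ‖L‖ₑ ≤ ENNReal.ofReal (T - c)⁻¹ * (∫⁻ t in Ioo c T, ‖u t‖ₑ) + ∫⁻ t in Ioo c T, ‖u' t‖ₑ := by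
  have hpos : 0 < T - c := sub_pos.2 hcT
  have key : ENNReal.ofReal (T - c) * ‖L‖ₑ ≤
      (∫⁻ t in Ioo c T, ‖u t‖ₑ) + ENNReal.ofReal (T - c) * ∫⁻ t in Ioo c T, ‖u' t‖ₑ :=
    calc ENNReal.ofReal (T - c) * ‖L‖ₑ = ∫⁻ _ in Ioo c T, ‖L‖ₑ := by
          rw [setLIntegral_const, Real.volume_Ioo, mul_comm]
      _ ≤ ∫⁻ a in Ioo c T, (‖u a‖ₑ + ∫⁻ t in Ioo c T, ‖u' t‖ₑ) := by
          refine setLIntegral_mono' measurableSet_Ioo fun a ha => ?_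
          rw [← h a ha]
          refine (enorm_add_le _ _).trans (add_le_add_right ?_ _)
          exact (enorm_integral_le_lintegral_enorm _).trans
            (lintegral_mono_set (Ioo_subset_Ioo_left ha.1.le))
      _ = _ := by
          rw [lintegral_add_right _ measurable_const, setLIntegral_const, Real.volume_Ioo,
            mul_comm]
  rwa [← ENNReal.mul_le_mul_iff_right (ENNReal.ofReal_pos.2 hpos).ne' ENNReal.ofReal_ne_top,
    mul_add, ← mul_assoc, ← ENNReal.ofReal_mul hpos.le, mul_inv_cancel₀ hpos.ne',
    ENNReal.ofReal_one, one_mul]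

lemma exists_enorm_rpow_le_wInt_add {p μ T : ℝ} (hp : 1 ≤ p) (hμ1 : μ ≤ 1) (hT : 0 < T) :
    ∃ K : ℝ≥0, ∀ (u u' : ℝ → E) (L : E), AEStronglyMeasurable u (volume.restrict (Ioo 0 T)) →
      AEStronglyMeasurable u' (volume.restrict (Ioo 0 T)) →
      (∀ a ∈ Ioo 0 T, u a + ∫ t in Ioo a T, u' t = L) →
      ‖L‖ₑ ^ p ≤ K * (wInt p μ (Ioo 0 T) u + wInt p μ (Ioo 0 T) u') := by
  set M := ENNReal.ofReal (max (T - T / 2)⁻¹ 1)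
  set A := ENNReal.ofReal (T - T / 2) ^ (p - 1) * ENNReal.ofReal ((T / 2) ^ (-(p * (1 - μ))))
  refine ⟨(M ^ p * 2 ^ (p - 1) * A).toNNReal, fun u u' L hu hu' hL => ?_⟩
  rw [ENNReal.coe_toNNReal (by finiteness)]
  set X := ∫⁻ t in Ioo (T / 2) T, ‖u t‖ₑ
  set Y := ∫⁻ t in Ioo (T / 2) T, ‖u' t‖ₑ
  have hLXY : ‖L‖ₑ ≤ M * (X + Y) := by
    refine (enorm_le_of_forall_add_integral_eq (half_lt_self hT)
      fun a ha => hL a ⟨(half_pos hT).trans ha.1, ha.2⟩).trans ?_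
    rw [mul_add]
    refine add_le_add (mul_le_mul_left (ENNReal.ofReal_le_ofReal (le_max_left _ _)) _) ?_
    exact le_mul_of_one_le_left' (ENNReal.one_le_ofReal.2 (le_max_right _ _))
  calc ‖L‖ₑ ^ p ≤ (M * (X + Y)) ^ p := ENNReal.rpow_le_rpow hLXY (by linarith)
    _ = M ^ p * (X + Y) ^ p := ENNReal.mul_rpow_of_nonneg _ _ (by linarith)
    _ ≤ M ^ p * (2 ^ (p - 1) * (X ^ p + Y ^ p)) := by
        gcongr
        exact ENNReal.rpow_add_le_mul_rpow_add_rpow _ _ hp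
    _ ≤ M ^ p * (2 ^ (p - 1) * (A * wInt p μ (Ioo 0 T) u + A * wInt p μ (Ioo 0 T) u')) := by
        gcongr
        · exact rpow_setLIntegral_enorm_le_wInt hp hμ1 (half_pos hT) hu
        · exact rpow_setLIntegral_enorm_le_wInt hp hμ1 (half_pos hT) hu'
    _ = M ^ p * 2 ^ (p - 1) * A * (wInt p μ (Ioo 0 T) u + wInt p μ (Ioo 0 T) u') := by ring

def ramp (T t : ℝ) : ℝ := (2 * T - min t (2 * T)) / T

def rampDeriv (T : ℝ) : ℝ → ℝ := (Iio (2 * T)).indicator fun _ => -T⁻¹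

lemma ramp_self {T : ℝ} (hT : 0 < T) : ramp T T = 1 := by
  rw [ramp, min_eq_left (by linarith), two_mul, add_sub_cancel_right, div_self hT.ne']

lemma enorm_ramp_le_one {T t : ℝ} (hT : 0 < T) (ht : T ≤ t) : ‖ramp T t‖ₑ ≤ 1 := by
  have hmin : T ≤ min t (2 * T) := le_min ht (by linarith)
  rw [Real.enorm_eq_ofReal_abs, ENNReal.ofReal_le_one, abs_le, ramp, div_le_one hT,
    le_div_iff₀ hT]
  constructor <;> linarith [min_le_right t (2 * T)]

lemma ramp_of_le {T t : ℝ} (ht : 2 * T ≤ t) : ramp T t = 0 := by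
  rw [ramp, min_eq_right ht, sub_self, zero_div]

lemma enorm_rampDeriv_le {T : ℝ} (hT : 0 < T) (t : ℝ) : ‖rampDeriv T t‖ₑ ≤ ENNReal.ofReal T⁻¹ :=
  (enorm_indicator_le_enorm_self _ t).trans_eq
    (by rw [enorm_neg, Real.enorm_eq_ofReal (inv_nonneg.2 hT.le)])

lemma rampDeriv_of_le {T t : ℝ} (ht : 2 * T ≤ t) : rampDeriv T t = 0 :=
  indicator_of_notMem (show t ∉ Iio (2 * T) from not_lt.2 ht) _

lemma integral_rampDeriv {T a b : ℝ} (hT : 0 < T) (hab : a ≤ b) :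
    ∫ t in Ioo a b, rampDeriv T t = ramp T b - ramp T a := by
  rw [rampDeriv, setIntegral_indicator measurableSet_Iio, Ioo_inter_Iio, setIntegral_const,
    Real.volume_real_Ioo, smul_eq_mul, ramp, ramp]
  rcases le_total a (2 * T) with ha | ha
  · rw [max_eq_left (by rw [sub_nonneg]; exact le_min hab ha), min_eq_left ha]
    field_simp
    ring
  · rw [max_eq_right (by rw [sub_nonpos]; exact (min_le_right _ _).trans ha), min_eq_right ha,
      min_eq_right (ha.trans hab)]
    ring

lemma exists_wInt_piecewise_ramp_le {p μ T : ℝ} (hp : 0 < p) (hμ1 : μ ≤ 1) (hT : 0 < T) :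
    ∃ G : ℝ≥0, ∀ (u u' : ℝ → E) (L : E),
      wInt p μ (Ioi 0) ((Iio T).piecewise u fun t => ramp T t • L) +
          wInt p μ (Ioi 0) ((Iio T).piecewise u' fun t => rampDeriv T t • L) ≤
        wInt p μ (Ioo 0 T) u + wInt p μ (Ioo 0 T) u' + G * ‖L‖ₑ ^ p := by
  set B := ENNReal.ofReal ((2 * T) ^ (p * (1 - μ))) * ENNReal.ofReal (2 * T - T)
  refine ⟨(B * (1 + ENNReal.ofReal T⁻¹ ^ p)).toNNReal, fun u u' L => ?_⟩
  rw [ENNReal.coe_toNNReal (by finiteness), wInt_piecewise_Iio hT, wInt_piecewise_Iio hT]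
  have hramp : wInt p μ (Ici T) (fun t => ramp T t • L) ≤ B * ‖L‖ₑ ^ p := by
    refine wInt_Ici_le hp hμ1 hT.le (fun t ht => ?_) fun t ht => ?_
    · rw [enorm_smul]
      exact mul_le_of_le_one_left' (enorm_ramp_le_one hT ht)
    · rw [ramp_of_le ht, zero_smul]
  have hrampDeriv : wInt p μ (Ici T) (fun t => rampDeriv T t • L) ≤
      B * (ENNReal.ofReal T⁻¹ * ‖L‖ₑ) ^ p := by
    refine wInt_Ici_le hp hμ1 hT.le (fun t _ => ?_) fun t ht => ?_
    · rw [enorm_smul]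
      exact mul_le_mul_left (enorm_rampDeriv_le hT t) _
    · rw [rampDeriv_of_le ht, zero_smul]
  calc _ ≤ wInt p μ (Ioo 0 T) u + B * ‖L‖ₑ ^ p +
        (wInt p μ (Ioo 0 T) u' + B * (ENNReal.ofReal T⁻¹ * ‖L‖ₑ) ^ p) := by
        gcongr
    _ = _ := by rw [ENNReal.mul_rpow_of_nonneg _ _ hp.le]; ring

variable [CompleteSpace E]

lemma locAC_ramp_smul {T : ℝ} (hT : 0 < T) (L : E) (I : Set ℝ) :
    LocAC I (fun t => ramp T t • L) (fun t => rampDeriv T t • L) := by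
  intro a b _ _ hab
  have hint : IntegrableOn (rampDeriv T) (Ioo a b) :=
    (integrableOn_const (C := -T⁻¹) measure_Ioo_lt_top.ne).indicator measurableSet_Iio
  exact ⟨hint.smul_const L, by rw [integral_smul_const, integral_rampDeriv hT hab, sub_smul]⟩

lemma MemW1.piecewise_ramp {p μ T : ℝ} (hp : 0 < p) (hμ1 : μ ≤ 1) (hT : 0 < T)
    {u u' : ℝ → E} {L : E} (hu : MemW1 p μ (Ioo 0 T) u u')
    (hend : ∀ a ∈ Ioo 0 T, IntegrableOn u' (Ioo a T) ∧ u a + ∫ t in Ioo a T, u' t = L) :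
    MemW1 p μ (Ioi 0) ((Iio T).piecewise u fun t => ramp T t • L)
      ((Iio T).piecewise u' fun t => rampDeriv T t • L) := by
  obtain ⟨G, hG⟩ := exists_wInt_piecewise_ramp_le (E := E) hp hμ1 hT
  have hfin := (hG u u' L).trans_lt
    (ENNReal.add_lt_top.2 ⟨ENNReal.add_lt_top.2 ⟨hu.1.2, hu.2.1.2⟩, by finiteness⟩)
  have hramp : Continuous (ramp T) := by unfold ramp; fun_prop
  have hrampDeriv : Measurable (rampDeriv T) := measurable_const.indicator measurableSet_Iio
  refine ⟨⟨.piecewise_Iio hu.1.1 (hramp.smul continuous_const).aestronglyMeasurable,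
      le_self_add.trans_lt hfin⟩,
    ⟨.piecewise_Iio hu.2.1.1 (hrampDeriv.aestronglyMeasurable.smul_const L),
      le_add_self.trans_lt hfin⟩,
    hu.2.2.piecewise_Iio (locAC_ramp_smul hT L _) fun a ha => ?_⟩
  simpa only [ramp_self hT, one_smul] using hend a ha

end

theorem stmt_8_general {E : Type*} [NormedAddCommGroup E] [NormedSpace ℝ E] [CompleteSpace E]
    (p μ : ℝ) (hp : 1 < p) (hμ1 : μ ≤ 1)
    (T : ℝ) (hT : 0 < T) :
    ∃ C : ℝ, 0 < C ∧
      ∃ Ext : (ℝ → E) → (ℝ → E),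
        (∀ u v : ℝ → E, Ext (u + v) = Ext u + Ext v) ∧
        (∀ (c : ℝ) (u : ℝ → E), Ext (c • u) = c • Ext u) ∧
        ∀ u u' : ℝ → E, MemW1 p μ (Ioo 0 T) u u' →
          ∃ v' : ℝ → E,
            MemW1 p μ (Ioi 0) (Ext u) v' ∧
            (∀ t ∈ Ioo (0 : ℝ) T, Ext u t = u t) ∧
            (wInt p μ (Ioi 0) (Ext u) + wInt p μ (Ioi 0) v') ^ (1 / p)
              ≤ ENNReal.ofReal C *
                (wInt p μ (Ioo 0 T) u + wInt p μ (Ioo 0 T) u') ^ (1 / p) := by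
  have hp0 : 0 < p := zero_lt_one.trans hp
  obtain ⟨Λ, hΛ⟩ := exists_linearMap_eq_of_tendsto (𝕜 := ℝ) (F := E) (𝓝[<] T)
  obtain ⟨K, hK⟩ := exists_enorm_rpow_le_wInt_add (E := E) (μ := μ) hp.le hμ1 hT
  obtain ⟨G, hG⟩ := exists_wInt_piecewise_ramp_le (E := E) hp0 hμ1 hT
  refine ⟨((1 + G * K : ℝ≥0) : ℝ) ^ (1 / p), by positivity,
    fun u => (Iio T).piecewise u fun t => ramp T t • Λ u, fun u v => ?_, fun c u => ?_,
    fun u u' hu => ?_⟩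
  · ext t
    by_cases ht : t < T <;> simp [Set.piecewise, ht, smul_add]
  · ext t
    by_cases ht : t < T <;> simp [Set.piecewise, ht, smul_comm c]
  obtain ⟨L, hL, hend⟩ := hu.exists_tendsto_nhdsLT hp.le hμ1 hT
  beta_reduce
  rw [hΛ u L hL]
  refine ⟨_, hu.piecewise_ramp hp0 hμ1 hT hend, fun t ht => piecewise_eq_of_mem _ _ _ ht.2,
    rpow_one_div_le_ofReal_mul_of_le_mul hp0 ?_⟩
  have hLK := hK u u' L hu.1.1 hu.2.1.1 fun a ha => (hend a ha).2
  calc _ ≤ wInt p μ (Ioo 0 T) u + wInt p μ (Ioo 0 T) u' +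
        G * (K * (wInt p μ (Ioo 0 T) u + wInt p μ (Ioo 0 T) u')) := (hG u u' L).trans (by gcongr)
    _ = _ := by push_cast; ring

/-- Extension operator on `W^1_{p,μ}((0,T);E)` for finite `T`: there are a
constant `C = C(p,μ,T)` and a linear extension operator from `W^1_{p,μ}((0,T);E)` to
`W^1_{p,μ}((0,∞);E)` of norm at most `C`. -/
theorem stmt_8 {E : Type*} [NormedAddCommGroup E] [NormedSpace ℝ E] [CompleteSpace E]
    (p μ : ℝ) (hp : 1 < p) (hμ : 1 / p < μ) (hμ1 : μ ≤ 1)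
    (T : ℝ) (hT : 0 < T) :
    ∃ C : ℝ, 0 < C ∧
      ∃ Ext : (ℝ → E) → (ℝ → E),
        (∀ u v : ℝ → E, Ext (u + v) = Ext u + Ext v) ∧
        (∀ (c : ℝ) (u : ℝ → E), Ext (c • u) = c • Ext u) ∧
        ∀ u u' : ℝ → E, MemW1 p μ (Ioo 0 T) u u' →
          ∃ v' : ℝ → E,
            MemW1 p μ (Ioi 0) (Ext u) v' ∧
            (∀ t ∈ Ioo (0 : ℝ) T, Ext u t = u t) ∧
            (wInt p μ (Ioi 0) (Ext u) + wInt p μ (Ioi 0) v') ^ (1 / p)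
              ≤ ENNReal.ofReal C *
                (wInt p μ (Ioo 0 T) u + wInt p μ (Ioo 0 T) u') ^ (1 / p) :=
  stmt_8_general p μ hp hμ1 T hT
end
end

section
/- Let E be a Banach space, p ∈ (1,∞), and μ ∈ (1/p,1]. For every u ∈ L_{p,μ}((0,∞);E) one has lim_{h→0+} ∫_0^∞ t^{p(1−μ)} ‖u(t+h) − u(t)‖_E^p dt = 0. That is, the semigroup of left translations is strongly continuous on L_{p,μ}((0,∞);E). -/
/-!
Put `w(t) = t^{1-μ} u(t)` for `t > 0` and `w = 0` elsewhere, so that `w ∈ L_p(ℝ; E)`. For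
`t, h > 0` one has
`t^{1-μ} (u(t+h) - u(t)) = (w(t+h) - w(t)) + ((t/(t+h))^{1-μ} - 1) w(t+h)`.
The first term tends to `0` in `L_p` by continuity of translation on `L_p(ℝ; E)`. Since `μ ≤ 1`,
the factor `(t/(t+h))^{1-μ} - 1` lies in `[-1, 0]` and tends to `0` pointwise as `h → 0+`, so
after the substitution `s = t + h` dominated convergence with majorant `‖w‖^p` kills the second
term.
-/

open MeasureTheory Set Filter Topology
open scoped ENNReal NNReal

noncomputable section

namespace MeasureTheory

section Translation

variable {G E : Type*} [AddCommGroup G] [TopologicalSpace G] [IsTopologicalAddGroup G]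
  [MeasurableSpace G] [BorelSpace G] {μ : Measure G} [IsLocallyFiniteMeasure μ]
  [μ.InnerRegularCompactLTTop] [μ.IsAddLeftInvariant] [NormedAddCommGroup E]

theorem MemLp.tendsto_eLpNorm_comp_add_sub {p : ℝ≥0∞} [Fact (1 ≤ p)] (hp : p ≠ ∞) {f : G → E}
    (hf : MemLp f p μ) :
    Tendsto (fun h => eLpNorm (fun x => f (x + h) - f x) p μ) (𝓝 0) (𝓝 0) := by
  have : Fact (p ≠ ∞) := ⟨hp⟩
  have hcont : Continuous fun h : G => DomAddAct.mk h +ᵥ hf.toLp f :=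
    continuous_vadd.comp (DomAddAct.continuous_mk.prodMk continuous_const)
  have hlim := hcont.tendsto 0
  rw [DomAddAct.mk_zero, zero_vadd] at hlim
  refine ((Lp.tendsto_Lp_iff_tendsto_eLpNorm' _ _).mp hlim).congr fun h => eLpNorm_congr_ae ?_
  have hshift : (fun x => hf.toLp f (h + x)) =ᵐ[μ] fun x => f (h + x) :=
    (measurePreserving_add_left μ h).quasiMeasurePreserving.ae_eq_comp hf.coeFn_toLp
  filter_upwards [DomAddAct.vadd_Lp_ae_eq (DomAddAct.mk h) (hf.toLp f), hshift, hf.coeFn_toLp]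
    with x h1 h2 h3
  simp only [Pi.sub_apply, h1, h3, Equiv.symm_apply_apply, vadd_eq_add, h2, add_comm x h]

theorem MemLp.tendsto_lintegral_enorm_comp_add_sub_rpow {p : ℝ} (hp : 1 ≤ p) {f : G → E}
    (hf : MemLp f (ENNReal.ofReal p) μ) :
    Tendsto (fun h => ∫⁻ x, ‖f (x + h) - f x‖ₑ ^ p ∂μ) (𝓝 0) (𝓝 0) := by
  have hp0 : 0 < p := zero_lt_one.trans_le hp
  have : Fact (1 ≤ ENNReal.ofReal p) := ⟨ENNReal.one_le_ofReal.mpr hp⟩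
  have hlim := ((ENNReal.continuous_rpow_const (y := p)).tendsto 0).comp
    (hf.tendsto_eLpNorm_comp_add_sub ENNReal.ofReal_ne_top)
  rw [ENNReal.zero_rpow_of_pos hp0] at hlim
  refine hlim.congr fun h => ?_
  rw [Function.comp_apply, eLpNorm_eq_lintegral_rpow_enorm_toReal (by simpa using hp0)
    ENNReal.ofReal_ne_top, ENNReal.toReal_ofReal hp0.le, ← ENNReal.rpow_mul,
    one_div_mul_cancel hp0.ne', ENNReal.rpow_one]

end Translation

theorem tendsto_lintegral_mul_of_le_one {α ι : Type*} [MeasurableSpace α]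
    {μ : Measure α} {l : Filter ι} [l.IsCountablyGenerated] {c : ι → α → ℝ≥0∞}
    {f : α → ℝ≥0∞} (hc_meas : ∀ᶠ i in l, AEMeasurable (c i) μ) (hf_meas : AEMeasurable f μ)
    (hc_le : ∀ᶠ i in l, ∀ᵐ x ∂μ, c i x ≤ 1) (hc_lim : ∀ᵐ x ∂μ, Tendsto (c · x) l (𝓝 0))
    (hf : ∫⁻ x, f x ∂μ ≠ ∞) :
    Tendsto (fun i => ∫⁻ x, c i x * f x ∂μ) l (𝓝 0) := by
  have hdom := tendsto_lintegral_filter_of_dominated_convergence' (μ := μ) (f := fun _ => 0) f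
    (hc_meas.mono fun i hi => hi.mul hf_meas)
    (hc_le.mono fun i hi => hi.mono fun x hx => mul_le_of_le_one_left' hx) hf
    (by
      filter_upwards [hc_lim, ae_lt_top' hf_meas hf] with x hx hfx
      simpa using ENNReal.Tendsto.mul_const hx (Or.inr hfx.ne))
  simpa using hdom

end MeasureTheory

section

variable {E : Type*} [NormedAddCommGroup E] [NormedSpace ℝ E]

def weightedZeroExt (β : ℝ) (u : ℝ → E) : ℝ → E :=
  (Ioi 0).indicator fun t => t ^ β • u t

lemma weightedZeroExt_of_pos {β t : ℝ} (u : ℝ → E) (ht : 0 < t) :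
    weightedZeroExt β u t = t ^ β • u t :=
  indicator_of_mem ht _

lemma enorm_rpow_smul_rpow {p β t : ℝ} (hp : 0 ≤ p) (ht : 0 ≤ t) (v : E) :
    ‖t ^ β • v‖ₑ ^ p = ENNReal.ofReal (t ^ (p * β) * ‖v‖ ^ p) := by
  rw [← ofReal_norm, norm_smul, Real.norm_of_nonneg (Real.rpow_nonneg ht _),
    ENNReal.ofReal_rpow_of_nonneg (by positivity) hp, Real.mul_rpow (by positivity) (norm_nonneg _),
    ← Real.rpow_mul ht, mul_comm β]

lemma lintegral_enorm_weightedZeroExt_rpow {p μ : ℝ} (hp : 0 < p) (u : ℝ → E) :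
    ∫⁻ t, ‖weightedZeroExt (1 - μ) u t‖ₑ ^ p = wInt p μ (Ioi 0) u := by
  rw [wInt, ← lintegral_indicator measurableSet_Ioi]
  refine lintegral_congr fun t => ?_
  by_cases ht : t ∈ Ioi 0
  · rw [indicator_of_mem ht, weightedZeroExt_of_pos u ht, enorm_rpow_smul_rpow hp.le ht.le]
  · rw [indicator_of_notMem ht, weightedZeroExt, indicator_of_notMem ht, enorm_zero,
      ENNReal.zero_rpow_of_pos hp]

lemma MemWLp.memLp_weightedZeroExt {p μ : ℝ} (hp : 0 < p) {u : ℝ → E}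
    (hu : MemWLp p μ (Ioi 0) u) :
    MemLp (weightedZeroExt (1 - μ) u) (ENNReal.ofReal p) volume := by
  refine ⟨(aestronglyMeasurable_indicator_iff measurableSet_Ioi).mpr
    ((measurable_id.pow_const _).aestronglyMeasurable.smul hu.1), ?_⟩
  rw [eLpNorm_lt_top_iff_lintegral_rpow_enorm_lt_top (by simpa using hp) ENNReal.ofReal_ne_top,
    ENNReal.toReal_ofReal hp.le, lintegral_enorm_weightedZeroExt_rpow hp]
  exact hu.2

/-- `(t / (t + h)) ^ β - 1`, written in the variable `s = t + h`. -/
def weightShiftDefect (β h : ℝ) : ℝ → ℝ :=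
  (Ioi h).indicator fun s => ((s - h) / s) ^ β - 1

lemma norm_weightShiftDefect_le_one {β h : ℝ} (hβ : 0 ≤ β) (hh : 0 ≤ h) (s : ℝ) :
    ‖weightShiftDefect β h s‖ ≤ 1 := by
  by_cases hs : s ∈ Ioi h
  · have hs0 : 0 < s := hh.trans_lt hs
    have hx0 : 0 ≤ (s - h) / s := div_nonneg (by linarith [mem_Ioi.mp hs]) hs0.le
    have hx1 : (s - h) / s ≤ 1 := (div_le_one hs0).mpr (by linarith)
    rw [weightShiftDefect, indicator_of_mem hs, Real.norm_eq_abs, abs_le]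
    constructor
    · linarith [Real.rpow_nonneg hx0 β]
    · linarith [Real.rpow_le_one hx0 hx1 hβ]
  · simp [weightShiftDefect, indicator_of_notMem hs]

lemma tendsto_weightShiftDefect (β s : ℝ) :
    Tendsto (fun h => weightShiftDefect β h s) (𝓝[>] 0) (𝓝 0) := by
  rcases le_or_gt s 0 with hs | hs
  · refine tendsto_const_nhds.congr' ?_
    filter_upwards [self_mem_nhdsWithin] with h hh
    rw [weightShiftDefect, indicator_of_notMem (notMem_Ioi.mpr (hs.trans (le_of_lt hh)))]
  · have hbase : Tendsto (fun h => (s - h) / s) (𝓝 0) (𝓝 1) := by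
      simpa [hs.ne'] using (((continuous_const (y := s)).sub continuous_id).div_const s).tendsto 0
    have hcont : Tendsto (fun h => ((s - h) / s) ^ β - 1) (𝓝 0) (𝓝 0) := by
      simpa using (hbase.rpow_const (Or.inl one_ne_zero)).sub_const 1
    refine (hcont.mono_left nhdsWithin_le_nhds).congr' ?_
    filter_upwards [nhdsWithin_le_nhds (Iio_mem_nhds hs)] with h hh
    rw [weightShiftDefect, indicator_of_mem (mem_Ioi.mpr hh)]

lemma measurable_weightShiftDefect (β h : ℝ) : Measurable (weightShiftDefect β h) :=
  (by fun_prop : Measurable fun s : ℝ => ((s - h) / s) ^ β - 1).indicator measurableSet_Ioi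

lemma tendsto_lintegral_enorm_weightShiftDefect_rpow_mul {β p : ℝ} (hβ : 0 ≤ β) (hp : 0 < p)
    {f : ℝ → ℝ≥0∞} (hf_meas : AEMeasurable f) (hf : ∫⁻ s, f s ≠ ∞) :
    Tendsto (fun h => ∫⁻ s, ‖weightShiftDefect β h s‖ₑ ^ p * f s) (𝓝[>] 0) (𝓝 0) := by
  refine tendsto_lintegral_mul_of_le_one
    (.of_forall fun h => ((measurable_weightShiftDefect β h).enorm.pow_const p).aemeasurable)
    hf_meas ?_ (.of_forall fun s => ?_) hf
  · filter_upwards [self_mem_nhdsWithin] with h hh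
    refine .of_forall fun s => ENNReal.rpow_le_one ?_ hp.le
    rw [← ofReal_norm]
    exact ENNReal.ofReal_le_one.mpr (norm_weightShiftDefect_le_one hβ (le_of_lt hh) s)
  · have := ((ENNReal.continuous_rpow_const (y := p)).tendsto _).comp
      (tendsto_weightShiftDefect β s).enorm
    rwa [enorm_zero, ENNReal.zero_rpow_of_pos hp] at this

lemma rpow_smul_sub_eq_weightedZeroExt {β t h : ℝ} (u : ℝ → E) (ht : 0 < t) (hth : 0 < t + h) :
    t ^ β • (u (t + h) - u t) = (weightedZeroExt β u (t + h) - weightedZeroExt β u t)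
      + weightShiftDefect β h (t + h) • weightedZeroExt β u (t + h) := by
  rw [weightShiftDefect, indicator_of_mem (by simpa using ht), add_sub_cancel_right,
    weightedZeroExt_of_pos u ht, weightedZeroExt_of_pos u hth, Real.div_rpow ht.le hth.le,
    sub_smul, smul_smul, div_mul_cancel₀ _ (Real.rpow_pos_of_pos hth _).ne', one_smul, smul_sub]
  abel

lemma setLIntegral_Ioi_rpow_mul_norm_sub_le {p β h : ℝ} (hp : 1 ≤ p) (hh : 0 ≤ h) {u : ℝ → E}
    (hw : AEStronglyMeasurable (weightedZeroExt β u)) :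
    ∫⁻ t in Ioi 0, ENNReal.ofReal (t ^ (p * β) * ‖u (t + h) - u t‖ ^ p) ≤
      2 ^ (p - 1) * ((∫⁻ t, ‖weightedZeroExt β u (t + h) - weightedZeroExt β u t‖ₑ ^ p)
        + ∫⁻ s, ‖weightShiftDefect β h s‖ₑ ^ p * ‖weightedZeroExt β u s‖ₑ ^ p) := by
  set w := weightedZeroExt β u
  set k := weightShiftDefect β h
  have hp0 : 0 ≤ p := zero_le_one.trans hp
  have hpoint : ∀ t ∈ Ioi (0 : ℝ), ENNReal.ofReal (t ^ (p * β) * ‖u (t + h) - u t‖ ^ p) ≤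
      2 ^ (p - 1) * (‖w (t + h) - w t‖ₑ ^ p + ‖k (t + h)‖ₑ ^ p * ‖w (t + h)‖ₑ ^ p) := by
    intro t ht
    have hth : 0 < t + h := add_pos_of_pos_of_nonneg ht hh
    calc ENNReal.ofReal (t ^ (p * β) * ‖u (t + h) - u t‖ ^ p)
        = ‖(w (t + h) - w t) + k (t + h) • w (t + h)‖ₑ ^ p := by
          rw [← enorm_rpow_smul_rpow hp0 ht.le, rpow_smul_sub_eq_weightedZeroExt u ht hth]
      _ ≤ (‖w (t + h) - w t‖ₑ + ‖k (t + h) • w (t + h)‖ₑ) ^ p :=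
          ENNReal.rpow_le_rpow (enorm_add_le _ _) hp0
      _ ≤ 2 ^ (p - 1) * (‖w (t + h) - w t‖ₑ ^ p + ‖k (t + h) • w (t + h)‖ₑ ^ p) :=
          ENNReal.rpow_add_le_mul_rpow_add_rpow _ _ hp
      _ = 2 ^ (p - 1) * (‖w (t + h) - w t‖ₑ ^ p + ‖k (t + h)‖ₑ ^ p * ‖w (t + h)‖ₑ ^ p) := by
          rw [enorm_smul, ENNReal.mul_rpow_of_nonneg _ _ hp0]
  have hdiff : AEMeasurable fun t => ‖w (t + h) - w t‖ₑ ^ p :=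
    ((hw.comp_measurePreserving (measurePreserving_add_right volume h)).sub hw).enorm.pow_const p
  calc ∫⁻ t in Ioi 0, ENNReal.ofReal (t ^ (p * β) * ‖u (t + h) - u t‖ ^ p)
      ≤ ∫⁻ t in Ioi 0,
          2 ^ (p - 1) * (‖w (t + h) - w t‖ₑ ^ p + ‖k (t + h)‖ₑ ^ p * ‖w (t + h)‖ₑ ^ p) :=
        setLIntegral_mono' measurableSet_Ioi hpoint
    _ ≤ ∫⁻ t, 2 ^ (p - 1) * (‖w (t + h) - w t‖ₑ ^ p + ‖k (t + h)‖ₑ ^ p * ‖w (t + h)‖ₑ ^ p) :=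
        setLIntegral_le_lintegral _ _
    _ = 2 ^ (p - 1) * ((∫⁻ t, ‖w (t + h) - w t‖ₑ ^ p) + ∫⁻ s, ‖k s‖ₑ ^ p * ‖w s‖ₑ ^ p) := by
        rw [lintegral_const_mul' _ _ (by finiteness), lintegral_add_left' hdiff,
          lintegral_add_right_eq_self (fun s => ‖k s‖ₑ ^ p * ‖w s‖ₑ ^ p) h]

end

theorem stmt_10_general {E : Type*} [NormedAddCommGroup E] [NormedSpace ℝ E]
    (p μ : ℝ) (hp : 1 < p) (hμ1 : μ ≤ 1)
    (u : ℝ → E) (hu : MemWLp p μ (Ioi 0) u) :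
    Tendsto
      (fun h : ℝ =>
        ∫⁻ t in Ioi (0 : ℝ), ENNReal.ofReal (t ^ (p * (1 - μ)) * ‖u (t + h) - u t‖ ^ p))
      (nhdsWithin 0 (Ioi 0)) (nhds 0) := by
  have hp0 : 0 < p := zero_lt_one.trans hp
  have hw := hu.memLp_weightedZeroExt hp0
  have hshift := (hw.tendsto_lintegral_enorm_comp_add_sub_rpow hp.le).mono_left
    (nhdsWithin_le_nhds (s := Ioi 0))
  have hdefect := tendsto_lintegral_enorm_weightShiftDefect_rpow_mul (sub_nonneg.mpr hμ1) hp0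
    (hw.aestronglyMeasurable.enorm.pow_const p)
    ((lintegral_enorm_weightedZeroExt_rpow hp0 u).trans_ne hu.2.ne)
  have hbound := ENNReal.Tendsto.const_mul (hshift.add hdefect)
    (Or.inr (by finiteness : (2 : ℝ≥0∞) ^ (p - 1) ≠ ∞))
  rw [add_zero, mul_zero] at hbound
  refine tendsto_of_tendsto_of_tendsto_of_le_of_le' tendsto_const_nhds hbound
    (.of_forall fun _ => zero_le) ?_
  filter_upwards [self_mem_nhdsWithin] with h hh
  exact setLIntegral_Ioi_rpow_mul_norm_sub_le hp.le (le_of_lt hh) hw.aestronglyMeasurable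

/-- Strong continuity of the left-translation semigroup on
`L_{p,μ}((0,∞);E)`. -/
theorem stmt_10 {E : Type*} [NormedAddCommGroup E] [NormedSpace ℝ E] [CompleteSpace E]
    (p μ : ℝ) (hp : 1 < p) (hμ : 1 / p < μ) (hμ1 : μ ≤ 1)
    (u : ℝ → E) (hu : MemWLp p μ (Ioi 0) u) :
    Tendsto
      (fun h : ℝ =>
        ∫⁻ t in Ioi (0 : ℝ), ENNReal.ofReal (t ^ (p * (1 - μ)) * ‖u (t + h) - u t‖ ^ p))
      (nhdsWithin 0 (Ioi 0)) (nhds 0) :=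
  stmt_10_general p μ hp hμ1 u hu
end
end

section
/- Let E be a Banach space, p ∈ (1,∞), and μ ∈ (1/p,1]. For every f ∈ L_{p,μ}((0,∞);E), the function u(t) = ∫_0^∞ e^{−s} f(t+s) ds is well defined as a Bochner integral for a.e. t > 0, belongs to W^1_{p,μ}((0,∞);E), satisfies u(t) − u'(t) = f(t) for a.e. t, and obeys ‖u‖_{L_{p,μ}((0,∞);E)} ≤ ‖f‖_{L_{p,μ}((0,∞);E)}. Moreover u is the unique element of W^1_{p,μ}((0,∞);E) with u − u' = f a.e.; in particular 1 − ∂_t : W^1_{p,μ}((0,∞);E) → L_{p,μ}((0,∞);E) is bijective. -/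
/-!
For `t > 0`, `u t = exp t • ∫ r in Ioi t, exp (-r) • f r`. Because `μ ≤ 1`, the
weight `t ^ (p * (1 - μ))` is bounded below on `(a, ∞)`, so `f` is `p`-integrable there, and
Jensen's inequality for the probability density `exp (-s)` on `(0, ∞)` makes the integral
converge; the product rule for locally absolutely continuous functions then gives `u' = u - f`.
Since the weight `t ^ (1 - μ)` is increasing, `t ^ (1 - μ) ‖u t‖ ≤ ∫ exp (-s) F (t + s) ds` with
`F r = r ^ (1 - μ) ‖f r‖`, and Jensen's inequality followed by Tonelli bounds the weighted norm
of `u` by that of `f`. The difference `w` of two solutions solves `w' = w`, so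
`w t = exp (t - a) • w a`, whose weighted norm is infinite unless `w a = 0`.
-/

open MeasureTheory Set Filter Topology
open scoped ENNReal NNReal

noncomputable section

section Translation

theorem map_const_add_volume_restrict_Ioi (t : ℝ) :
    (volume.restrict (Ioi (0 : ℝ))).map (t + ·) = volume.restrict (Ioi t) := by
  have h := (measurableEmbedding_addLeft t).restrict_map volume (Ioi t)
  rw [map_add_left_eq_self, preimage_const_add_Ioi, sub_self] at h
  exact h.symm

theorem ae_restrict_Ioi_comp_const_add {P : ℝ → Prop} {t : ℝ} (ht : 0 ≤ t)
    (hP : ∀ᵐ r ∂volume.restrict (Ioi 0), P r) :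
    ∀ᵐ s ∂volume.restrict (Ioi 0), P (t + s) := by
  rw [← (measurableEmbedding_addLeft t).ae_map_iff, map_const_add_volume_restrict_Ioi]
  exact ae_restrict_of_ae_restrict_of_subset (Ioi_subset_Ioi ht) hP

variable {E : Type*} [NormedAddCommGroup E]

theorem integrableOn_Ioi_comp_const_add_iff {g : ℝ → E} {t : ℝ} :
    IntegrableOn (fun s => g (t + s)) (Ioi 0) ↔ IntegrableOn g (Ioi t) := by
  rw [IntegrableOn, IntegrableOn, ← map_const_add_volume_restrict_Ioi t,
    (measurableEmbedding_addLeft t).integrable_map_iff]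
  rfl

theorem setIntegral_Ioi_comp_const_add [NormedSpace ℝ E] (g : ℝ → E) (t : ℝ) :
    ∫ s in Ioi 0, g (t + s) = ∫ r in Ioi t, g r := by
  rw [← map_const_add_volume_restrict_Ioi t, (measurableEmbedding_addLeft t).integral_map]

theorem setLIntegral_Ioi_comp_const_add (g : ℝ → ℝ≥0∞) (t : ℝ) :
    ∫⁻ s in Ioi 0, g (t + s) = ∫⁻ r in Ioi t, g r := by
  rw [← map_const_add_volume_restrict_Ioi t, (measurableEmbedding_addLeft t).lintegral_map]

end Translation

theorem integral_Ioo_smul_integral_Ioo {E : Type*} [NormedAddCommGroup E] [NormedSpace ℝ E]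
    [CompleteSpace E] {a b : ℝ} {φ : ℝ → ℝ} (hφ : ContinuousOn φ (Icc a b))
    {g : ℝ → E} (hg : IntegrableOn g (Ioo a b)) :
    ∫ t in Ioo a b, φ t • ∫ r in Ioo a t, g r =
      ∫ r in Ioo a b, (∫ t in Ioo r b, φ t) • g r := by
  set ν := volume.restrict (Ioo a b)
  obtain ⟨C, hC⟩ := isCompact_Icc.exists_bound_of_continuousOn hφ
  let k : ℝ → ℝ → E := fun t r =>
    {z : ℝ × ℝ | z.2 < z.1}.indicator (fun z => φ z.1 • g z.2) (t, r)
  have hk : Integrable (Function.uncurry k) (ν.prod ν) := by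
    refine Integrable.mono' ((integrable_const C).mul_prod hg.norm) ?_ ?_
    · exact (((hφ.mono Ioo_subset_Icc_self).aestronglyMeasurable measurableSet_Ioo).comp_fst.smul
        hg.aestronglyMeasurable.comp_snd).indicator
          (measurableSet_lt measurable_snd measurable_fst)
    · filter_upwards [Measure.quasiMeasurePreserving_fst.ae (ae_restrict_mem measurableSet_Ioo)]
        with z hz
      calc ‖Function.uncurry k z‖ ≤ ‖φ z.1 • g z.2‖ :=
            norm_indicator_le_norm_self (fun z : ℝ × ℝ => φ z.1 • g z.2) (z.1, z.2)
        _ ≤ C * ‖g z.2‖ := by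
          rw [norm_smul]
          exact mul_le_mul_of_nonneg_right (hC _ (Ioo_subset_Icc_self hz)) (norm_nonneg _)
  have hleft : ∀ t ∈ Ioo a b, ∫ r, k t r ∂ν = φ t • ∫ r in Ioo a t, g r := by
    intro t ht
    have hkt : k t = (Iio t).indicator (fun r => φ t • g r) := by
      ext r; by_cases hr : r < t <;> simp [k, hr]
    rw [hkt, setIntegral_indicator measurableSet_Iio, Ioo_inter_Iio, min_eq_right ht.2.le,
      integral_smul]
  have hright : ∀ r ∈ Ioo a b, ∫ t, k t r ∂ν = (∫ t in Ioo r b, φ t) • g r := by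
    intro r hr
    have hkr : (fun t => k t r) = (Ioi r).indicator (fun t => φ t • g r) := by
      ext t; by_cases ht : r < t <;> simp [k, ht]
    rw [hkr, setIntegral_indicator measurableSet_Ioi, Ioo_inter_Ioi, max_eq_right hr.1.le,
      integral_smul_const]
  rw [← setIntegral_congr_fun measurableSet_Ioo hleft, integral_integral_swap hk,
    setIntegral_congr_fun measurableSet_Ioo hright]

namespace LocAC

variable {E : Type*} [NormedAddCommGroup E] [NormedSpace ℝ E] {I : Set ℝ} {u u' : ℝ → E}

theorem integrableOn (h : LocAC I u u') {a b : ℝ} (ha : a ∈ I) (hb : b ∈ I) :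
    IntegrableOn u' (uIcc a b) := by
  wlog hab : a ≤ b generalizing a b
  · rw [uIcc_comm]; exact this hb ha (le_of_not_ge hab)
  rw [uIcc_of_le hab, integrableOn_Icc_iff_integrableOn_Ioo]
  exact (h a b ha hb hab).1

theorem eq_add_intervalIntegral (h : LocAC I u u') {a x : ℝ} (ha : a ∈ I) (hx : x ∈ I) :
    u x = u a + ∫ t in a..x, u' t := by
  rcases le_total a x with hax | hxa
  · rw [intervalIntegral.integral_of_le hax, integral_Ioc_eq_integral_Ioo, ← (h a x ha hx hax).2]
    abel
  · rw [intervalIntegral.integral_symm, intervalIntegral.integral_of_le hxa,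
      integral_Ioc_eq_integral_Ioo, ← (h x a hx ha hxa).2]
    abel

theorem continuousOn_Icc [CompleteSpace E] (h : LocAC I u u') (hI : I.OrdConnected) {a b : ℝ}
    (ha : a ∈ I) (hb : b ∈ I) : ContinuousOn u (Icc a b) := by
  have hprim := intervalIntegral.continuousOn_primitive_interval (h.integrableOn ha hb)
  refine ((continuousOn_const (c := u a)).add (hprim.mono Icc_subset_uIcc)).congr fun x hx => ?_
  exact h.eq_add_intervalIntegral ha (hI.out ha hb hx)

theorem continuousOn [CompleteSpace E] (h : LocAC I u u') (hI : IsOpen I)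
    (hI' : I.OrdConnected) : ContinuousOn u I := by
  intro x hx
  obtain ⟨a, b, hxab, hnhds, hsub⟩ := exists_Icc_mem_subset_of_mem_nhds (hI.mem_nhds hx)
  have hab : a ≤ b := hxab.1.trans hxab.2
  have hcont := h.continuousOn_Icc hI' (hsub (left_mem_Icc.2 hab)) (hsub (right_mem_Icc.2 hab))
  exact (hcont.continuousAt hnhds).continuousWithinAt

theorem hasDerivAt [CompleteSpace E] (h : LocAC I u u') (hI : IsOpen I) {x : ℝ} (hx : x ∈ I)
    (hcont : ContinuousAt u' x) : HasDerivAt u (u' x) x := by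
  obtain ⟨a, b, hxab, hnhds, hsub⟩ := exists_Icc_mem_subset_of_mem_nhds (hI.mem_nhds hx)
  have hab : a ≤ b := hxab.1.trans hxab.2
  have hint := h.integrableOn (hsub (left_mem_Icc.2 hab)) (hsub (right_mem_Icc.2 hab))
  have hmeas : StronglyMeasurableAtFilter u' (𝓝 x) :=
    ⟨Icc a b, hnhds, (hint.mono_set Icc_subset_uIcc).aestronglyMeasurable⟩
  refine ((intervalIntegral.integral_hasDerivAt_right IntervalIntegrable.refl hmeas
    hcont).const_add (u x)).congr_of_eventuallyEq ?_
  filter_upwards [hI.mem_nhds hx] with y hy using h.eq_add_intervalIntegral hx hy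

theorem sub {v v' : ℝ → E} (hu : LocAC I u u') (hv : LocAC I v v') :
    LocAC I (u - v) (u' - v') := by
  intro a b ha hb hab
  obtain ⟨hu_int, hu_eq⟩ := hu a b ha hb hab
  obtain ⟨hv_int, hv_eq⟩ := hv a b ha hb hab
  refine ⟨hu_int.sub hv_int, ?_⟩
  simp only [Pi.sub_apply]
  rw [integral_sub hu_int hv_int, ← hu_eq, ← hv_eq]
  abel

theorem congr_ae {v' : ℝ → E} (h : LocAC I u u') (hI : I.OrdConnected)
    (huv : u' =ᵐ[volume.restrict I] v') : LocAC I u v' := by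
  intro a b ha hb hab
  have hsub : Ioo a b ⊆ I := Ioo_subset_Icc_self.trans (hI.out ha hb)
  have huv' : u' =ᵐ[volume.restrict (Ioo a b)] v' := ae_restrict_of_ae_restrict_of_subset hsub huv
  obtain ⟨hint, heq⟩ := h a b ha hb hab
  exact ⟨hint.congr huv', heq.trans (integral_congr_ae huv')⟩

theorem eq_exp_smul [CompleteSpace E] (h : LocAC I u u) (hI : IsOpen I) (hI' : I.OrdConnected)
    {a b : ℝ} (ha : a ∈ I) (hb : b ∈ I) : u b = Real.exp (b - a) • u a := by
  have hderiv : ∀ x ∈ I, HasDerivAt (fun y => Real.exp (-y) • u y) 0 x := by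
    intro x hx
    have hux := h.hasDerivAt hI hx ((h.continuousOn hI hI').continuousAt (hI.mem_nhds hx))
    have hprod := ((hasDerivAt_neg x).exp).smul hux
    rwa [mul_neg_one, neg_smul, add_neg_cancel] at hprod
  have hconst := hI.is_const_of_deriv_eq_zero hI'.isPreconnected
    (fun x hx => (hderiv x hx).differentiableAt.differentiableWithinAt)
    (fun x hx => (hderiv x hx).deriv) hb ha
  rw [sub_eq_add_neg, Real.exp_add, mul_smul, ← hconst, smul_smul, ← Real.exp_add,
    add_neg_cancel, Real.exp_zero, one_smul]

theorem smul [CompleteSpace E] (h : LocAC I u u') (hI : I.OrdConnected) {φ φ' : ℝ → ℝ}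
    (hφ : ∀ x, HasDerivAt φ (φ' x) x) (hφ' : Continuous φ') :
    LocAC I (fun t => φ t • u t) (fun t => φ' t • u t + φ t • u' t) := by
  intro a b ha hb hab
  have hφcont : Continuous φ := continuous_iff_continuousAt.2 fun x => (hφ x).continuousAt
  obtain ⟨hu'_int, hu_ab⟩ := h a b ha hb hab
  have hint₁ : IntegrableOn (fun t => φ' t • u t) (Ioo a b) :=
    ((hφ'.continuousOn.smul (h.continuousOn_Icc hI ha hb)).integrableOn_Icc).mono_set
      Ioo_subset_Icc_self
  have hint₂ : IntegrableOn (fun t => φ t • u' t) (Ioo a b) :=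
    (((integrableOn_Icc_iff_integrableOn_Ioo (μ := volume)).2 hu'_int).continuousOn_smul
      hφcont.continuousOn isCompact_Icc).mono_set Ioo_subset_Icc_self
  have hftc : ∀ r ≤ b, ∫ t in Ioo r b, φ' t = φ b - φ r := fun r hr => by
    rw [← integral_Ioc_eq_integral_Ioo, ← intervalIntegral.integral_of_le hr,
      intervalIntegral.integral_eq_sub_of_hasDerivAt (fun x _ => hφ x)
        (hφ'.intervalIntegrable _ _)]
  -- With `u t = u a + ∫ r in Ioo a t, u' r`, Fubini turns `∫ φ' • (u - u a)` into
  -- `∫ (φ b - φ r) • u' r`.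
  have hL : ∫ t in Ioo a b, φ' t • ∫ r in Ioo a t, u' r =
      (∫ t in Ioo a b, φ' t • u t) - (φ b - φ a) • u a := by
    have hu_at : ∀ t ∈ Ioo a b,
        φ' t • ∫ r in Ioo a t, u' r = φ' t • u t - φ' t • u a :=
      fun t ht => by rw [← smul_sub, (h a t ha (hI.out ha hb (Ioo_subset_Icc_self ht)) ht.1.le).2]
    rw [setIntegral_congr_fun measurableSet_Ioo hu_at, integral_sub hint₁
      ((hφ'.continuousOn.integrableOn_Icc.mono_set Ioo_subset_Icc_self).smul_const _),
      integral_smul_const, hftc a hab]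
  have hR : ∫ r in Ioo a b, (∫ t in Ioo r b, φ' t) • u' r =
      φ b • (u b - u a) - ∫ r in Ioo a b, φ r • u' r := by
    rw [hu_ab, ← integral_smul,
      ← integral_sub (f := fun r => φ b • u' r) (hu'_int.smul _) hint₂]
    refine setIntegral_congr_fun measurableSet_Ioo fun r hr => ?_
    rw [hftc r hr.2.le, sub_smul]
  refine ⟨hint₁.add hint₂, ?_⟩
  rw [integral_add hint₁ hint₂]
  have hparts :=
    hL.symm.trans ((integral_Ioo_smul_integral_Ioo hφ'.continuousOn hu'_int).trans hR)
  show φ b • u b - φ a • u a = _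
  linear_combination (norm := module) -hparts

end LocAC

theorem rpow_lintegral_mul_le_lintegral_mul_rpow {α : Type*} [MeasurableSpace α]
    {ν : Measure α} {p : ℝ} (hp : 1 ≤ p) {W F : α → ℝ≥0∞} (hW : AEMeasurable W ν)
    (hF : AEMeasurable F ν) (hW1 : ∫⁻ a, W a ∂ν ≤ 1) :
    (∫⁻ a, W a * F a ∂ν) ^ p ≤ ∫⁻ a, W a * F a ^ p ∂ν := by
  rcases hp.eq_or_lt with rfl | hp
  · simp
  have hpq : p.HolderConjugate p.conjExponent := .conjExponent hp
  set q := p.conjExponent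
  -- Hölder's inequality for the factorisation `W F = (W ^ (1/p) F) * W ^ (1/q)`
  have hHolder := ENNReal.lintegral_mul_le_Lp_mul_Lq ν hpq ((hW.pow_const (1 / p)).mul hF)
    (hW.pow_const (1 / q))
  have hsplit : ∀ a, (W a ^ (1 / p) * F a) * W a ^ (1 / q) = W a * F a := fun a => by
    rw [mul_right_comm, ← ENNReal.rpow_add_of_nonneg _ _ (one_div_nonneg.2 hpq.nonneg)
      (one_div_nonneg.2 hpq.symm.nonneg),
      one_div, one_div, hpq.inv_add_inv_eq_one, ENNReal.rpow_one]
  have hpow_p : ∀ a, (W a ^ (1 / p) * F a) ^ p = W a * F a ^ p := fun a => by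
    rw [ENNReal.mul_rpow_of_nonneg _ _ hpq.nonneg, ← ENNReal.rpow_mul,
      one_div_mul_cancel hpq.ne_zero, ENNReal.rpow_one]
  have hpow_q : ∀ a, (W a ^ (1 / q)) ^ q = W a := fun a => by
    rw [← ENNReal.rpow_mul, one_div_mul_cancel hpq.symm.ne_zero, ENNReal.rpow_one]
  simp only [Pi.mul_apply, hsplit, hpow_p, hpow_q] at hHolder
  calc (∫⁻ a, W a * F a ∂ν) ^ p
      ≤ ((∫⁻ a, W a * F a ^ p ∂ν) ^ (1 / p) * 1) ^ p := by
        gcongr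
        refine hHolder.trans (mul_le_mul_right ?_ _)
        exact ENNReal.rpow_le_one hW1 (one_div_nonneg.2 hpq.symm.nonneg)
    _ = ∫⁻ a, W a * F a ^ p ∂ν := by
        rw [mul_one, ← ENNReal.rpow_mul, one_div_mul_cancel hpq.ne_zero, ENNReal.rpow_one]

theorem lintegral_exp_neg_Ioi_zero :
    ∫⁻ s in Ioi (0 : ℝ), ENNReal.ofReal (Real.exp (-s)) = 1 := by
  have hint : IntegrableOn (fun s : ℝ => Real.exp (-s)) (Ioi 0) := by
    simpa using exp_neg_integrableOn_Ioi 0 zero_lt_one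
  rw [← ofReal_integral_eq_lintegral_ofReal hint (ae_of_all _ fun s => (Real.exp_pos _).le),
    integral_exp_neg_Ioi_zero, ENNReal.ofReal_one]

theorem lintegral_Ioi_lintegral_mul_comp_add_le {W Ψ : ℝ → ℝ≥0∞} (hW : Measurable W)
    (hΨ : Measurable Ψ) :
    ∫⁻ t in Ioi 0, ∫⁻ s in Ioi 0, W s * Ψ (t + s) ≤
      (∫⁻ s in Ioi 0, W s) * ∫⁻ t in Ioi 0, Ψ t := by
  have hmeas : Measurable (Function.uncurry fun t s : ℝ => W s * Ψ (t + s)) :=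
    (hW.comp measurable_snd).mul (hΨ.comp (measurable_fst.add measurable_snd))
  rw [lintegral_lintegral_swap hmeas.aemeasurable, ← lintegral_mul_const _ hW]
  refine setLIntegral_mono' measurableSet_Ioi fun s hs => ?_
  rw [lintegral_const_mul (W s) (f := fun t => Ψ (t + s)) (hΨ.comp (measurable_add_const s))]
  refine mul_le_mul_right ?_ (W s)
  calc ∫⁻ t in Ioi 0, Ψ (t + s) = ∫⁻ r in Ioi s, Ψ r := by
        simp_rw [add_comm _ s]; exact setLIntegral_Ioi_comp_const_add Ψ s
    _ ≤ ∫⁻ r in Ioi 0, Ψ r := lintegral_mono_set (Ioi_subset_Ioi (le_of_lt hs))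

theorem lintegral_Ioi_rpow_lintegral_exp_neg_mul_le {p : ℝ} (hp : 1 ≤ p)
    {Ψ : ℝ → ℝ≥0∞} (hΨ : AEMeasurable Ψ (volume.restrict (Ioi 0))) :
    ∫⁻ t in Ioi 0, (∫⁻ s in Ioi 0, ENNReal.ofReal (Real.exp (-s)) * Ψ (t + s)) ^ p ≤
      ∫⁻ t in Ioi 0, Ψ t ^ p := by
  set W : ℝ → ℝ≥0∞ := fun s => ENNReal.ofReal (Real.exp (-s))
  have hW : Measurable W := (Real.measurable_exp.comp measurable_neg).ennreal_ofReal
  have hmk := hΨ.ae_eq_mk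
  calc ∫⁻ t in Ioi 0, (∫⁻ s in Ioi 0, W s * Ψ (t + s)) ^ p
      = ∫⁻ t in Ioi 0, (∫⁻ s in Ioi 0, W s * hΨ.mk Ψ (t + s)) ^ p := by
        refine setLIntegral_congr_fun measurableSet_Ioi fun t ht => ?_
        congr 1
        refine lintegral_congr_ae ?_
        filter_upwards [ae_restrict_Ioi_comp_const_add (le_of_lt ht) hmk] with s hs
        rw [hs]
    _ ≤ ∫⁻ t in Ioi 0, ∫⁻ s in Ioi 0, W s * hΨ.mk Ψ (t + s) ^ p := by
        refine lintegral_mono fun t => rpow_lintegral_mul_le_lintegral_mul_rpow hp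
          hW.aemeasurable (hΨ.measurable_mk.comp (measurable_const_add t)).aemeasurable
          lintegral_exp_neg_Ioi_zero.le
    _ ≤ (∫⁻ s in Ioi 0, W s) * ∫⁻ t in Ioi 0, hΨ.mk Ψ t ^ p :=
        lintegral_Ioi_lintegral_mul_comp_add_le hW (hΨ.measurable_mk.pow_const p)
    _ = ∫⁻ t in Ioi 0, Ψ t ^ p := by
        rw [lintegral_exp_neg_Ioi_zero, one_mul]
        refine lintegral_congr_ae ?_
        filter_upwards [hmk] with t ht
        rw [ht]

section Weighted

variable {E : Type*} [NormedAddCommGroup E] {p μ : ℝ}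

theorem wInt_Ioi_eq_lintegral (hp : 0 ≤ p) (f : ℝ → E) :
    wInt p μ (Ioi 0) f =
      ∫⁻ t in Ioi 0, (ENNReal.ofReal (t ^ (1 - μ)) * ‖f t‖ₑ) ^ p := by
  refine setLIntegral_congr_fun measurableSet_Ioi fun t ht => ?_
  rw [ENNReal.mul_rpow_of_nonneg _ _ hp, ← ofReal_norm,
    ENNReal.ofReal_rpow_of_nonneg (Real.rpow_nonneg (le_of_lt ht) _) hp,
    ENNReal.ofReal_rpow_of_nonneg (norm_nonneg _) hp,
    ← ENNReal.ofReal_mul (Real.rpow_nonneg (Real.rpow_nonneg ht.le _) _),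
    ← Real.rpow_mul (le_of_lt ht), mul_comm (1 - μ)]

theorem aemeasurable_ofReal_rpow_mul_enorm {f : ℝ → E} {ν : Measure ℝ}
    (hf : AEStronglyMeasurable f ν) (α : ℝ) :
    AEMeasurable (fun t => ENNReal.ofReal (t ^ α) * ‖f t‖ₑ) ν :=
  (measurable_id.pow_const α).ennreal_ofReal.aemeasurable.mul hf.enorm

theorem MemWLp.sub (hp : 0 ≤ p) {v w : ℝ → E} (hv : MemWLp p μ (Ioi 0) v)
    (hw : MemWLp p μ (Ioi 0) w) : MemWLp p μ (Ioi 0) (v - w) := by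
  refine ⟨hv.1.sub hw.1, ?_⟩
  have hv_fin := hv.2
  have hw_fin := hw.2
  rw [wInt_Ioi_eq_lintegral hp] at hv_fin hw_fin ⊢
  set C := ENNReal.LpAddConst (ENNReal.ofReal p)⁻¹
  calc ∫⁻ t in Ioi 0, (ENNReal.ofReal (t ^ (1 - μ)) * ‖(v - w) t‖ₑ) ^ p
      ≤ ∫⁻ t in Ioi 0, C * ((ENNReal.ofReal (t ^ (1 - μ)) * ‖v t‖ₑ) ^ p +
          (ENNReal.ofReal (t ^ (1 - μ)) * ‖w t‖ₑ) ^ p) := by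
        refine lintegral_mono fun t => ?_
        refine le_trans ?_ (ENNReal.rpow_add_le_mul_rpow_add_rpow' _ _ hp)
        rw [← mul_add]
        gcongr
        exact enorm_sub_le
    _ = C * ((∫⁻ t in Ioi 0, (ENNReal.ofReal (t ^ (1 - μ)) * ‖v t‖ₑ) ^ p) +
          ∫⁻ t in Ioi 0, (ENNReal.ofReal (t ^ (1 - μ)) * ‖w t‖ₑ) ^ p) := by
        rw [lintegral_const_mul' _ _ (ENNReal.LpAddConst_lt_top _).ne,
          lintegral_add_left' ((aemeasurable_ofReal_rpow_mul_enorm hv.1 _).pow_const p)]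
    _ < ⊤ :=
        ENNReal.mul_lt_top (ENNReal.LpAddConst_lt_top _) (ENNReal.add_lt_top.2 ⟨hv_fin, hw_fin⟩)

theorem lintegral_Ioi_enorm_rpow_lt_top (hμ1 : μ ≤ 1) (hp : 0 ≤ p) {f : ℝ → E}
    (hf : wInt p μ (Ioi 0) f < ⊤) {t : ℝ} (ht : 0 < t) :
    ∫⁻ r in Ioi t, ‖f r‖ₑ ^ p < ⊤ := by
  have hc : ENNReal.ofReal (t ^ (1 - μ)) ^ p ≠ 0 := by
    simp [ENNReal.rpow_eq_zero_iff, Real.rpow_pos_of_pos ht, hp.not_gt]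
  refine ENNReal.lt_top_of_mul_ne_top_right ?_ hc
  rw [← lintegral_const_mul' _ _ (by simp [hp])]
  refine (lt_of_le_of_lt ?_ hf).ne
  rw [wInt_Ioi_eq_lintegral hp]
  calc ∫⁻ r in Ioi t, ENNReal.ofReal (t ^ (1 - μ)) ^ p * ‖f r‖ₑ ^ p
      ≤ ∫⁻ r in Ioi t, (ENNReal.ofReal (r ^ (1 - μ)) * ‖f r‖ₑ) ^ p := by
        refine setLIntegral_mono' measurableSet_Ioi fun r hr => ?_
        rw [ENNReal.mul_rpow_of_nonneg _ _ hp]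
        gcongr
        exact le_of_lt hr
    _ ≤ _ := lintegral_mono_set (Ioi_subset_Ioi ht.le)

theorem wInt_Ioi_eq_top_of_norm_le (hμ1 : μ ≤ 1) (hp : 0 < p) {w : ℝ → E} {a : ℝ}
    (ha : 0 < a) (hwa : w a ≠ 0) (hgrowth : ∀ t, a < t → ‖w a‖ ≤ ‖w t‖) :
    wInt p μ (Ioi 0) w = ⊤ := by
  have hc : (ENNReal.ofReal (a ^ (1 - μ)) * ‖w a‖ₑ) ^ p ≠ 0 := by
    simp [ENNReal.rpow_eq_zero_iff, Real.rpow_pos_of_pos ha, hwa, hp, hp.not_gt]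
  rw [wInt_Ioi_eq_lintegral hp.le, eq_top_iff]
  calc ⊤ = ∫⁻ _ in Ioi a, (ENNReal.ofReal (a ^ (1 - μ)) * ‖w a‖ₑ) ^ p := by
        rw [setLIntegral_const, Real.volume_Ioi, ENNReal.mul_top hc]
    _ ≤ ∫⁻ t in Ioi a, (ENNReal.ofReal (t ^ (1 - μ)) * ‖w t‖ₑ) ^ p := by
        refine setLIntegral_mono' measurableSet_Ioi fun t ht => ?_
        gcongr
        · exact le_of_lt ht
        · rw [← ofReal_norm, ← ofReal_norm]
          exact ENNReal.ofReal_le_ofReal (hgrowth t ht)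
    _ ≤ _ := lintegral_mono_set (Ioi_subset_Ioi ha.le)

end Weighted

section ExpConv

variable {E : Type*} [NormedAddCommGroup E] [NormedSpace ℝ E]

def expConv (f : ℝ → E) (t : ℝ) : E := ∫ s in Ioi (0 : ℝ), Real.exp (-s) • f (t + s)

theorem exp_neg_smul_comp_add (f : ℝ → E) (t s : ℝ) :
    Real.exp (-s) • f (t + s) = Real.exp t • (Real.exp (-(t + s)) • f (t + s)) := by
  rw [smul_smul, ← Real.exp_add, neg_add, add_neg_cancel_left]

theorem expConv_eq_exp_smul_integral_Ioi (f : ℝ → E) (t : ℝ) :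
    expConv f t = Real.exp t • ∫ r in Ioi t, Real.exp (-r) • f r := by
  simp_rw [expConv, exp_neg_smul_comp_add f t, integral_smul,
    setIntegral_Ioi_comp_const_add (fun r => Real.exp (-r) • f r)]

theorem integrableOn_exp_neg_smul_comp_add_iff {f : ℝ → E} {t : ℝ} :
    IntegrableOn (fun s => Real.exp (-s) • f (t + s)) (Ioi 0) ↔
      IntegrableOn (fun r => Real.exp (-r) • f r) (Ioi t) := by
  simp_rw [exp_neg_smul_comp_add f t]
  exact (integrable_fun_smul_iff (Real.exp_pos t).ne' _).trans
    (integrableOn_Ioi_comp_const_add_iff (g := fun r => Real.exp (-r) • f r))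

theorem integrableOn_exp_neg_smul_comp_add {p : ℝ} (hp : 1 ≤ p) {f : ℝ → E}
    (hf : AEStronglyMeasurable f (volume.restrict (Ioi 0))) {t : ℝ} (ht : 0 ≤ t)
    (hfin : ∫⁻ r in Ioi t, ‖f r‖ₑ ^ p < ⊤) :
    IntegrableOn (fun s => Real.exp (-s) • f (t + s)) (Ioi 0) := by
  have hshift : AEStronglyMeasurable (fun s => f (t + s)) (volume.restrict (Ioi 0)) := by
    have hmap := (measurableEmbedding_addLeft t).aestronglyMeasurable_map_iff (g := f)
      (μ := volume.restrict (Ioi 0))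
    rw [map_const_add_volume_restrict_Ioi] at hmap
    exact hmap.1 (hf.mono_measure (Measure.restrict_mono (Ioi_subset_Ioi ht) le_rfl))
  refine ⟨(Real.continuous_exp.comp continuous_neg).aestronglyMeasurable.smul hshift, ?_⟩
  rw [hasFiniteIntegral_iff_enorm, ← ENNReal.rpow_lt_top_iff_of_pos (zero_lt_one.trans_le hp)]
  simp_rw [enorm_smul, Real.enorm_of_nonneg (Real.exp_pos _).le]
  calc (∫⁻ s in Ioi 0, ENNReal.ofReal (Real.exp (-s)) * ‖f (t + s)‖ₑ) ^ p
      ≤ ∫⁻ s in Ioi 0, ENNReal.ofReal (Real.exp (-s)) * ‖f (t + s)‖ₑ ^ p :=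
        rpow_lintegral_mul_le_lintegral_mul_rpow hp
          (Real.measurable_exp.comp measurable_neg).ennreal_ofReal.aemeasurable
          hshift.enorm lintegral_exp_neg_Ioi_zero.le
    _ ≤ ∫⁻ s in Ioi 0, ‖f (t + s)‖ₑ ^ p := by
        refine setLIntegral_mono' measurableSet_Ioi fun s hs => ?_
        refine mul_le_of_le_one_left zero_le (ENNReal.ofReal_le_one.2 ?_)
        exact Real.exp_le_one_iff.2 (neg_nonpos.2 (le_of_lt hs))
    _ < ⊤ := by rwa [setLIntegral_Ioi_comp_const_add (fun r => ‖f r‖ₑ ^ p)]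

theorem locAC_setIntegral_Ioi {I : Set ℝ} {g : ℝ → E}
    (hg : ∀ a ∈ I, IntegrableOn g (Ioi a)) : LocAC I (fun t => ∫ r in Ioi t, g r) (-g) := by
  intro a b ha _ hab
  have hga := hg a ha
  refine ⟨hga.neg.mono_set Ioo_subset_Ioi_self, ?_⟩
  dsimp only
  rw [← Ioc_union_Ioi_eq_Ioi hab, setIntegral_union (Ioc_disjoint_Ioi le_rfl) measurableSet_Ioi
    (hga.mono_set Ioc_subset_Ioi_self) (hga.mono_set (Ioi_subset_Ioi hab)),
    integral_Ioc_eq_integral_Ioo, Pi.neg_def, integral_neg]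
  abel

theorem locAC_expConv [CompleteSpace E] {I : Set ℝ} (hI : I.OrdConnected) {f : ℝ → E}
    (hf : ∀ t ∈ I, IntegrableOn (fun s => Real.exp (-s) • f (t + s)) (Ioi 0)) :
    LocAC I (expConv f) (expConv f - f) := by
  have hG := (locAC_setIntegral_Ioi fun t ht =>
    integrableOn_exp_neg_smul_comp_add_iff.1 (hf t ht)).smul hI Real.hasDerivAt_exp
      Real.continuous_exp
  have hu : (fun t => Real.exp t • ∫ r in Ioi t, Real.exp (-r) • f r) = expConv f :=
    funext fun t => (expConv_eq_exp_smul_integral_Ioi f t).symm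
  rw [← hu]
  convert hG using 1
  funext t
  rw [Pi.sub_apply, Pi.neg_apply, smul_neg, smul_smul, ← Real.exp_add, add_neg_cancel,
    Real.exp_zero, one_smul, sub_eq_add_neg]

end ExpConv

section NormBound

variable {E : Type*} [NormedAddCommGroup E] [NormedSpace ℝ E]

theorem ofReal_rpow_mul_enorm_expConv_le {α : ℝ} (hα : 0 ≤ α) (f : ℝ → E) {t : ℝ}
    (ht : 0 ≤ t) :
    ENNReal.ofReal (t ^ α) * ‖expConv f t‖ₑ ≤
      ∫⁻ s in Ioi 0, ENNReal.ofReal (Real.exp (-s)) *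
        (ENNReal.ofReal ((t + s) ^ α) * ‖f (t + s)‖ₑ) := by
  calc ENNReal.ofReal (t ^ α) * ‖expConv f t‖ₑ
      ≤ ENNReal.ofReal (t ^ α) *
          ∫⁻ s in Ioi 0, ENNReal.ofReal (Real.exp (-s)) * ‖f (t + s)‖ₑ := by
        gcongr
        refine (enorm_integral_le_lintegral_enorm _).trans_eq ?_
        simp_rw [enorm_smul, Real.enorm_of_nonneg (Real.exp_pos _).le]
    _ = ∫⁻ s in Ioi 0,
          ENNReal.ofReal (t ^ α) * (ENNReal.ofReal (Real.exp (-s)) * ‖f (t + s)‖ₑ) :=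
        (lintegral_const_mul' _ _ ENNReal.ofReal_ne_top).symm
    _ ≤ _ := by
        refine setLIntegral_mono' measurableSet_Ioi fun s hs => ?_
        rw [mul_left_comm]
        gcongr
        exact le_add_of_nonneg_right (le_of_lt hs)

theorem wInt_expConv_le {p μ : ℝ} (hμ1 : μ ≤ 1) (hp : 1 ≤ p) {f : ℝ → E}
    (hf : AEStronglyMeasurable f (volume.restrict (Ioi 0))) :
    wInt p μ (Ioi 0) (expConv f) ≤ wInt p μ (Ioi 0) f := by
  rw [wInt_Ioi_eq_lintegral (by linarith), wInt_Ioi_eq_lintegral (by linarith)]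
  calc ∫⁻ t in Ioi 0, (ENNReal.ofReal (t ^ (1 - μ)) * ‖expConv f t‖ₑ) ^ p
      ≤ ∫⁻ t in Ioi 0, (∫⁻ s in Ioi 0, ENNReal.ofReal (Real.exp (-s)) *
          (ENNReal.ofReal ((t + s) ^ (1 - μ)) * ‖f (t + s)‖ₑ)) ^ p :=
        setLIntegral_mono' measurableSet_Ioi fun t ht => ENNReal.rpow_le_rpow
          (ofReal_rpow_mul_enorm_expConv_le (by linarith) f (le_of_lt ht)) (by linarith)
    _ ≤ _ := lintegral_Ioi_rpow_lintegral_exp_neg_mul_le hp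
          (aemeasurable_ofReal_rpow_mul_enorm hf (1 - μ))

end NormBound

theorem LocAC.eqOn_zero {E : Type*} [NormedAddCommGroup E] [NormedSpace ℝ E] [CompleteSpace E]
    {p μ : ℝ} {w : ℝ → E} (h : LocAC (Ioi 0) w w) (hμ1 : μ ≤ 1) (hp : 0 < p)
    (hw : wInt p μ (Ioi 0) w < ⊤) : EqOn w 0 (Ioi 0) := by
  intro a ha
  by_contra hwa
  refine hw.ne (wInt_Ioi_eq_top_of_norm_le hμ1 hp ha hwa fun t hat => ?_)
  rw [h.eq_exp_smul isOpen_Ioi ordConnected_Ioi ha (mem_Ioi.2 (ha.trans hat)), norm_smul,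
    Real.norm_of_nonneg (Real.exp_pos _).le]
  exact le_mul_of_one_le_left (norm_nonneg _) (Real.one_le_exp (sub_nonneg.2 hat.le))

theorem stmt_12_general {E : Type*} [NormedAddCommGroup E] [NormedSpace ℝ E] [CompleteSpace E]
    (p μ : ℝ) (hp : 1 < p) (hμ1 : μ ≤ 1)
    (f : ℝ → E) (hf : MemWLp p μ (Ioi 0) f)
    (u : ℝ → E) (hu : ∀ t, u t = ∫ s in Ioi (0 : ℝ), Real.exp (-s) • f (t + s)) :
    (∀ᵐ t ∂(MeasureTheory.volume.restrict (Ioi (0 : ℝ))),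
        IntegrableOn (fun s => Real.exp (-s) • f (t + s)) (Ioi (0 : ℝ))) ∧
    (∃ u' : ℝ → E,
      MemW1 p μ (Ioi 0) u u' ∧
      (∀ᵐ t ∂(MeasureTheory.volume.restrict (Ioi (0 : ℝ))), u t - u' t = f t)) ∧
    wNorm p μ (Ioi 0) u ≤ wNorm p μ (Ioi 0) f ∧
    (∀ v v' : ℝ → E, MemW1 p μ (Ioi 0) v v' →
      (∀ᵐ t ∂(MeasureTheory.volume.restrict (Ioi (0 : ℝ))), v t - v' t = f t) →
      ∀ᵐ t ∂(MeasureTheory.volume.restrict (Ioi (0 : ℝ))), v t = u t) := by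
  obtain rfl : u = expConv f := funext hu
  have hp0 : 0 < p := zero_lt_one.trans hp
  have hint : ∀ t ∈ Ioi (0 : ℝ),
      IntegrableOn (fun s => Real.exp (-s) • f (t + s)) (Ioi 0) :=
    fun t ht => integrableOn_exp_neg_smul_comp_add hp.le hf.1 (le_of_lt ht)
      (lintegral_Ioi_enorm_rpow_lt_top hμ1 hp0.le hf.2 ht)
  have hAC : LocAC (Ioi 0) (expConv f) (expConv f - f) := locAC_expConv ordConnected_Ioi hint
  have hle := wInt_expConv_le hμ1 hp.le hf.1
  have hmem : MemWLp p μ (Ioi 0) (expConv f) :=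
    ⟨(hAC.continuousOn isOpen_Ioi ordConnected_Ioi).aestronglyMeasurable measurableSet_Ioi,
      hle.trans_lt hf.2⟩
  refine ⟨ae_restrict_of_forall_mem measurableSet_Ioi hint,
    ⟨expConv f - f, ⟨hmem, hmem.sub hp0.le hf, hAC⟩,
      ae_of_all _ fun t => sub_sub_cancel _ _⟩,
    ENNReal.rpow_le_rpow hle (by positivity), ?_⟩
  rintro v v' ⟨hv, -, hvAC⟩ hvf
  have hw : LocAC (Ioi 0) (v - expConv f) (v - expConv f) := by
    refine (hvAC.sub hAC).congr_ae ordConnected_Ioi ?_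
    filter_upwards [hvf] with t ht
    simp only [Pi.sub_apply, ← ht]
    abel
  have hzero := hw.eqOn_zero hμ1 hp0 (hv.sub hp0.le hmem).2
  filter_upwards [self_mem_ae_restrict measurableSet_Ioi] with t ht
  exact sub_eq_zero.1 (hzero ht)

/-- For `f ∈ L_{p,μ}((0,∞);E)` the function
`u(t) = ∫_0^∞ e^{-s} f(t+s) ds` is well defined a.e., belongs to `W^1_{p,μ}((0,∞);E)`,
solves `u - u' = f` a.e., satisfies `‖u‖_{L_{p,μ}} ≤ ‖f‖_{L_{p,μ}}`, and is the unique such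
solution; in particular `1 - ∂_t : W^1_{p,μ} → L_{p,μ}` is bijective. -/
theorem stmt_12 {E : Type*} [NormedAddCommGroup E] [NormedSpace ℝ E] [CompleteSpace E]
    (p μ : ℝ) (hp : 1 < p) (hμ : 1 / p < μ) (hμ1 : μ ≤ 1)
    (f : ℝ → E) (hf : MemWLp p μ (Ioi 0) f)
    (u : ℝ → E) (hu : ∀ t, u t = ∫ s in Ioi (0 : ℝ), Real.exp (-s) • f (t + s)) :
    (∀ᵐ t ∂(MeasureTheory.volume.restrict (Ioi (0 : ℝ))),
        IntegrableOn (fun s => Real.exp (-s) • f (t + s)) (Ioi (0 : ℝ))) ∧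
    (∃ u' : ℝ → E,
      MemW1 p μ (Ioi 0) u u' ∧
      (∀ᵐ t ∂(MeasureTheory.volume.restrict (Ioi (0 : ℝ))), u t - u' t = f t)) ∧
    wNorm p μ (Ioi 0) u ≤ wNorm p μ (Ioi 0) f ∧
    (∀ v v' : ℝ → E, MemW1 p μ (Ioi 0) v v' →
      (∀ᵐ t ∂(MeasureTheory.volume.restrict (Ioi (0 : ℝ))), v t - v' t = f t) →
      ∀ᵐ t ∂(MeasureTheory.volume.restrict (Ioi (0 : ℝ))), v t = u t) :=
  stmt_12_general p μ hp hμ1 f hf u hu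
end
end

section
/- Let E be a Banach space, p ∈ (1,∞), μ ∈ (1/p,1], and let T > 0 be finite. There is a constant C = C(p,μ), independent of T, such that for every g ∈ L_{p,μ}((0,T);E) and u(t) = ∫_0^t g(τ) dτ one has the Poincaré inequality ‖u‖_{L_{p,μ}((0,T);E)} ≤ C · T · ‖g‖_{L_{p,μ}((0,T);E)}. -/
/-!
Hölder's inequality with the weight `τ ^ (1 - μ)` bounds `‖u t‖ ^ p` by `‖g‖ ^ p` in
`L_{p,μ}((0,t);E)` times `(∫₀ᵗ τ ^ (p' (μ - 1)) dτ) ^ (p - 1)`, `p'` the conjugate exponent.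
That integral is finite exactly because `μ > 1/p`, and equals a constant times `t ^ s` with
`s (p - 1) = μ p - 1`; so the weighted integrand `t ^ (p (1 - μ)) ‖u t‖ ^ p` is at most a
constant times `t ^ (p - 1) ‖g‖ ^ p`, and integrating over `(0,T)` produces the factor `T ^ p`.
-/

open MeasureTheory Set Filter Topology
open scoped ENNReal NNReal

noncomputable section

theorem lintegral_Ioo_zero_ofReal_rpow {a t : ℝ} (ha : -1 < a) (ht : 0 ≤ t) :
    ∫⁻ τ in Ioo 0 t, ENNReal.ofReal (τ ^ a) = ENNReal.ofReal (t ^ (a + 1) / (a + 1)) := by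
  have hint : IntegrableOn (fun τ : ℝ => τ ^ a) (Ioo 0 t) :=
    (intervalIntegral.intervalIntegrable_rpow' ha).1.mono_set Ioo_subset_Ioc_self
  rw [← ofReal_integral_eq_lintegral_ofReal hint
    ((ae_restrict_iff' measurableSet_Ioo).2 (ae_of_all _ fun τ hτ => Real.rpow_nonneg hτ.1.le _)),
    ← integral_Ioc_eq_integral_Ioo, ← intervalIntegral.integral_of_le ht,
    integral_rpow (Or.inl ha), Real.zero_rpow (by linarith), sub_zero]

theorem enorm_setIntegral_le_wInt_rpow_mul {E : Type*} [NormedAddCommGroup E] [NormedSpace ℝ E]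
    {p q : ℝ} (hpq : p.HolderConjugate q) (μ : ℝ) {s : Set ℝ} (hs : MeasurableSet s)
    (hs_pos : s ⊆ Ioi 0) {g : ℝ → E} (hg : AEStronglyMeasurable g (volume.restrict s)) :
    ‖∫ τ in s, g τ‖ₑ ≤ wInt p μ s g ^ (1 / p) *
      (∫⁻ τ in s, ENNReal.ofReal (τ ^ (q * (μ - 1)))) ^ (1 / q) := by
  set w : ℝ → ℝ≥0∞ := fun τ => ENNReal.ofReal (τ ^ (1 - μ)) * ‖g τ‖ₑ
  set v : ℝ → ℝ≥0∞ := fun τ => ENNReal.ofReal (τ ^ (μ - 1))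
  have hsplit : ∫⁻ τ in s, ‖g τ‖ₑ = ∫⁻ τ in s, (w * v) τ := by
    refine setLIntegral_congr_fun hs fun τ hτ => ?_
    have hτ : 0 < τ := hs_pos hτ
    rw [Pi.mul_apply, mul_right_comm, ← ENNReal.ofReal_mul (Real.rpow_nonneg hτ.le _),
      ← Real.rpow_add hτ]
    simp
  have hw : ∫⁻ τ in s, w τ ^ p = wInt p μ s g := by
    refine setLIntegral_congr_fun hs fun τ hτ => ?_
    have hτ : 0 < τ := hs_pos hτ
    rw [ENNReal.mul_rpow_of_nonneg _ _ hpq.nonneg, ← ofReal_norm,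
      ENNReal.ofReal_rpow_of_nonneg (Real.rpow_nonneg hτ.le _) hpq.nonneg,
      ENNReal.ofReal_rpow_of_nonneg (norm_nonneg _) hpq.nonneg,
      ← ENNReal.ofReal_mul (by positivity), ← Real.rpow_mul hτ.le, mul_comm (1 - μ)]
  have hv : ∫⁻ τ in s, v τ ^ q = ∫⁻ τ in s, ENNReal.ofReal (τ ^ (q * (μ - 1))) := by
    refine setLIntegral_congr_fun hs fun τ hτ => ?_
    have hτ : 0 < τ := hs_pos hτ
    rw [ENNReal.ofReal_rpow_of_nonneg (Real.rpow_nonneg hτ.le _) hpq.symm.nonneg,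
      ← Real.rpow_mul hτ.le, mul_comm]
  calc ‖∫ τ in s, g τ‖ₑ ≤ ∫⁻ τ in s, ‖g τ‖ₑ := enorm_integral_le_lintegral_enorm _
    _ = ∫⁻ τ in s, (w * v) τ := hsplit
    _ ≤ (∫⁻ τ in s, w τ ^ p) ^ (1 / p) * (∫⁻ τ in s, v τ ^ q) ^ (1 / q) :=
      ENNReal.lintegral_mul_le_Lp_mul_Lq _ hpq (by fun_prop) (by fun_prop)
    _ = _ := by rw [hw, hv]

theorem ofReal_rpow_mul_norm_setIntegral_Ioo_rpow_le {E : Type*} [NormedAddCommGroup E]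
    [NormedSpace ℝ E] {p μ t : ℝ} (hp : 1 < p) (hμ : 1 / p < μ) (ht : 0 < t) {g : ℝ → E}
    (hg : AEStronglyMeasurable g (volume.restrict (Ioo 0 t))) :
    ENNReal.ofReal (t ^ (p * (1 - μ)) * ‖∫ τ in Ioo 0 t, g τ‖ ^ p) ≤
      ENNReal.ofReal (((p - 1) / (μ * p - 1)) ^ (p - 1) * t ^ (p - 1)) *
        wInt p μ (Ioo 0 t) g := by
  have hpq : p.HolderConjugate p.conjExponent := .conjExponent hp
  set q := p.conjExponent
  set s := (μ * p - 1) / (p - 1)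
  have hp1 : 0 < p - 1 := hpq.sub_one_pos
  have hμp : 0 < μ * p - 1 := by
    have := (div_lt_iff₀ hpq.pos).1 hμ; linarith
  have hs : 0 < s := div_pos hμp hp1
  have hqs : q * (μ - 1) + 1 = s := by
    rw [hpq.conjugate_eq]
    simp only [s]
    field_simp
    ring
  have hholder : ‖∫ τ in Ioo 0 t, g τ‖ₑ ≤
      wInt p μ (Ioo 0 t) g ^ (1 / p) * ENNReal.ofReal (t ^ s / s) ^ (1 / q) := by
    have := enorm_setIntegral_le_wInt_rpow_mul hpq μ measurableSet_Ioo
      (fun τ hτ => hτ.1) hg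
    rwa [lintegral_Ioo_zero_ofReal_rpow (by linarith) ht.le, hqs] at this
  have hexp : t ^ (p * (1 - μ)) * (t ^ s / s) ^ (p - 1) =
      ((p - 1) / (μ * p - 1)) ^ (p - 1) * t ^ (p - 1) := by
    rw [Real.div_rpow (by positivity) hs.le, ← Real.rpow_mul ht.le, div_mul_cancel₀ _ hp1.ne',
      mul_div_assoc', ← Real.rpow_add ht, show p * (1 - μ) + (μ * p - 1) = p - 1 by ring,
      show (p - 1) / (μ * p - 1) = s⁻¹ from (inv_div _ _).symm, Real.inv_rpow hs.le,
      div_eq_inv_mul]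
  calc ENNReal.ofReal (t ^ (p * (1 - μ)) * ‖∫ τ in Ioo 0 t, g τ‖ ^ p)
      = ENNReal.ofReal (t ^ (p * (1 - μ))) * ‖∫ τ in Ioo 0 t, g τ‖ₑ ^ p := by
        rw [ENNReal.ofReal_mul (by positivity), ← ofReal_norm,
          ENNReal.ofReal_rpow_of_nonneg (norm_nonneg _) hpq.nonneg]
    _ ≤ ENNReal.ofReal (t ^ (p * (1 - μ))) *
        (wInt p μ (Ioo 0 t) g ^ (1 / p) * ENNReal.ofReal (t ^ s / s) ^ (1 / q)) ^ p := by
        gcongr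
    _ = ENNReal.ofReal (t ^ (p * (1 - μ)) * (t ^ s / s) ^ (p - 1)) * wInt p μ (Ioo 0 t) g := by
        rw [ENNReal.mul_rpow_of_nonneg _ _ hpq.nonneg, ← ENNReal.rpow_mul, ← ENNReal.rpow_mul,
          one_div_mul_cancel hpq.ne_zero, ENNReal.rpow_one, one_div_mul_eq_div,
          hpq.div_conj_eq_sub_one, ENNReal.ofReal_rpow_of_nonneg (by positivity) hp1.le,
          ENNReal.ofReal_mul (by positivity), mul_assoc, mul_comm (wInt p μ (Ioo 0 t) g)]
    _ = _ := by rw [hexp]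

theorem wInt_primitive_le {E : Type*} [NormedAddCommGroup E] [NormedSpace ℝ E]
    {p μ T : ℝ} (hp : 1 < p) (hμ : 1 / p < μ) (hT : 0 ≤ T) {g : ℝ → E}
    (hg : AEStronglyMeasurable g (volume.restrict (Ioo 0 T))) :
    wInt p μ (Ioo 0 T) (fun t => ∫ τ in Ioo 0 t, g τ) ≤
      ENNReal.ofReal (((p - 1) / (μ * p - 1)) ^ (p - 1) / p * T ^ p) * wInt p μ (Ioo 0 T) g := by
  set K := ((p - 1) / (μ * p - 1)) ^ (p - 1)
  have hK : 0 ≤ K := by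
    have := (div_lt_iff₀ (by linarith : (0 : ℝ) < p)).1 hμ
    exact Real.rpow_nonneg (div_nonneg (by linarith) (by linarith)) _
  have hpoint : ∀ t ∈ Ioo 0 T,
      ENNReal.ofReal (t ^ (p * (1 - μ)) * ‖∫ τ in Ioo 0 t, g τ‖ ^ p) ≤
        ENNReal.ofReal K * ENNReal.ofReal (t ^ (p - 1)) * wInt p μ (Ioo 0 T) g := by
    intro t ht
    calc _ ≤ ENNReal.ofReal (K * t ^ (p - 1)) * wInt p μ (Ioo 0 t) g :=
          ofReal_rpow_mul_norm_setIntegral_Ioo_rpow_le hp hμ ht.1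
            (hg.mono_measure (Measure.restrict_mono (Ioo_subset_Ioo_right ht.2.le) le_rfl))
      _ ≤ _ := by
        rw [ENNReal.ofReal_mul hK]
        exact mul_le_mul_right (lintegral_mono_set (Ioo_subset_Ioo_right ht.2.le)) _
  calc wInt p μ (Ioo 0 T) (fun t => ∫ τ in Ioo 0 t, g τ)
      ≤ ∫⁻ t in Ioo 0 T, ENNReal.ofReal K * ENNReal.ofReal (t ^ (p - 1)) * wInt p μ (Ioo 0 T) g :=
        setLIntegral_mono (by fun_prop) hpoint
    _ = ENNReal.ofReal K * ENNReal.ofReal (T ^ p / p) * wInt p μ (Ioo 0 T) g := by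
        rw [lintegral_mul_const _ (by fun_prop), lintegral_const_mul _ (by fun_prop),
          lintegral_Ioo_zero_ofReal_rpow (by linarith) hT, sub_add_cancel]
    _ = _ := by
        rw [← ENNReal.ofReal_mul hK, mul_div_assoc', ← div_mul_eq_mul_div]

theorem stmt_14_general {E : Type*} [NormedAddCommGroup E] [NormedSpace ℝ E]
    (p μ : ℝ) (hp : 1 < p) (hμ : 1 / p < μ) :
    ∃ C : ℝ, 0 < C ∧ ∀ T : ℝ, 0 < T → ∀ g u : ℝ → E,
      MemWLp p μ (Ioo 0 T) g →
      (∀ t, u t = ∫ τ in Ioo (0 : ℝ) t, g τ) →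
      wNorm p μ (Ioo 0 T) u ≤ ENNReal.ofReal (C * T) * wNorm p μ (Ioo 0 T) g := by
  have hp0 : 0 < p := by linarith
  have hKp : 0 < ((p - 1) / (μ * p - 1)) ^ (p - 1) / p := by
    have := (div_lt_iff₀ hp0).1 hμ
    exact div_pos (Real.rpow_pos_of_pos (div_pos (by linarith) (by linarith)) _) hp0
  refine ⟨(((p - 1) / (μ * p - 1)) ^ (p - 1) / p) ^ (1 / p), by positivity, ?_⟩
  intro T hT g u hg hu
  rw [show u = fun t => ∫ τ in Ioo 0 t, g τ from funext hu]
  calc _ ≤ (ENNReal.ofReal (((p - 1) / (μ * p - 1)) ^ (p - 1) / p * T ^ p) *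
          wInt p μ (Ioo 0 T) g) ^ (1 / p) :=
        ENNReal.rpow_le_rpow (wInt_primitive_le hp hμ hT.le hg.1) (by positivity)
    _ = _ := by
        rw [wNorm, ENNReal.mul_rpow_of_nonneg _ _ (by positivity),
          ENNReal.ofReal_rpow_of_nonneg (by positivity) (by positivity),
          Real.mul_rpow hKp.le (by positivity), ← Real.rpow_mul hT.le, mul_one_div_cancel hp0.ne',
          Real.rpow_one]

/-- Poincaré inequality in `L_{p,μ}((0,T);E)`: for `u(t) = ∫_0^t g(τ) dτ`
one has `‖u‖_{L_{p,μ}((0,T);E)} ≤ C T ‖g‖_{L_{p,μ}((0,T);E)}` with `C = C(p,μ)`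
independent of `T`. -/
theorem stmt_14 {E : Type*} [NormedAddCommGroup E] [NormedSpace ℝ E] [CompleteSpace E]
    (p μ : ℝ) (hp : 1 < p) (hμ : 1 / p < μ) (hμ1 : μ ≤ 1) :
    ∃ C : ℝ, 0 < C ∧ ∀ T : ℝ, 0 < T → ∀ g u : ℝ → E,
      MemWLp p μ (Ioo 0 T) g →
      (∀ t, u t = ∫ τ in Ioo (0 : ℝ) t, g τ) →
      wNorm p μ (Ioo 0 T) u ≤ ENNReal.ofReal (C * T) * wNorm p μ (Ioo 0 T) g :=
  stmt_14_general p μ hp hμ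
end
end

section
/- Let E be a Banach space, p ∈ (1,∞), and μ ∈ (1/p,1]. Then every u ∈ W^1_{p,μ}((0,∞);E) has a (unique) bounded, uniformly continuous representative ũ : [0,∞) → E, and there is a constant C = C(p,μ) with sup_{t ≥ 0} ‖ũ(t)‖_E ≤ C (‖u‖_{L_{p,μ}((0,∞);E)} + ‖u'‖_{L_{p,μ}((0,∞);E)}). In particular W^1_{p,μ}((0,∞);E) embeds continuously into BUC([0,∞);E). -/
open MeasureTheory Set Filter Topology
open scoped ENNReal NNReal

noncomputable section

/-! Hölder's inequality against the weight `t ^ (p * (1 - μ))` bounds `∫_a^b ‖u'‖` by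
`‖u'‖_{L_{p,μ}} (∫_a^b t ^ (-β))^(1 - 1/p)` with `β = p (1 - μ) / (p - 1)`, and `β < 1` exactly
when `μ > 1/p`. Hence `u` is Hölder continuous of order `μ - 1/p` on `(0,∞)` and extends uniquely
to `[0,∞)`. For the sup bound, compare `u t` with `u s` at a point `s ≥ max t 1` within distance 2
of `t` where the weight is at least one and `‖u s‖ ^ p` is at most the weighted integral. -/

theorem HolderOnWith.exists_holderOnWith_closure_eqOn {X Y : Type*} [PseudoEMetricSpace X]
    [EMetricSpace Y] [CompleteSpace Y] {C r : ℝ≥0} {f : X → Y} {s : Set X}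
    (hf : HolderOnWith C r f s) (hr : 0 < r) :
    ∃ g : X → Y, HolderOnWith C r g (closure s) ∧ EqOn g f s := by
  rcases s.eq_empty_or_nonempty with rfl | ⟨x₀, -⟩
  · exact ⟨f, by rw [closure_empty]; exact holderOnWith_empty C r f, eqOn_refl f ∅⟩
  have : Nonempty Y := ⟨f x₀⟩
  have hlim : ∀ x ∈ closure s, Tendsto f (𝓝[s] x) (𝓝 (limUnder (𝓝[s] x) f)) := by
    intro x hx
    have := mem_closure_iff_nhdsWithin_neBot.1 hx
    exact tendsto_nhds_limUnder <| cauchy_map_iff_exists_tendsto.1 <|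
      (cauchy_nhds.mono nhdsWithin_le_nhds).map_of_le (hf.uniformContinuousOn hr) inf_le_right
  refine ⟨fun x => limUnder (𝓝[s] x) f, fun x hx y hy => ?_, fun x hx => ?_⟩
  · have := mem_closure_iff_nhdsWithin_neBot.1 hx
    have := mem_closure_iff_nhdsWithin_neBot.1 hy
    have hcont : Continuous fun q : X × X => (C : ℝ≥0∞) * edist q.1 q.2 ^ (r : ℝ) :=
      (ENNReal.continuous_const_mul ENNReal.coe_ne_top).comp
        ((ENNReal.continuous_rpow_const).comp continuous_edist)
    refine le_of_tendsto_of_tendsto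
      (((hlim x hx).comp tendsto_fst).edist ((hlim y hy).comp tendsto_snd))
      ((hcont.tendsto (x, y)).mono_left ?_)
      (eventually_of_mem (prod_mem_prod self_mem_nhdsWithin self_mem_nhdsWithin)
        fun q hq => hf _ hq.1 _ hq.2)
    rw [nhds_prod_eq]
    exact prod_mono nhdsWithin_le_nhds nhdsWithin_le_nhds
  · have := mem_closure_iff_nhdsWithin_neBot.1 (subset_closure hx)
    exact ((hf.continuousOn hr) x hx).tendsto.limUnder_eq

theorem holderOnWith_of_norm_sub_le {E : Type*} [SeminormedAddCommGroup E] {f : ℝ → E}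
    {s : Set ℝ} {C r : ℝ≥0}
    (h : ∀ a ∈ s, ∀ b ∈ s, a ≤ b → ‖f b - f a‖ ≤ C * (b - a) ^ (r : ℝ)) :
    HolderOnWith C r f s := by
  intro x hx y hy
  wlog hxy : x ≤ y generalizing x y
  · rw [edist_comm, edist_comm x]
    exact this y hy x hx (le_of_not_ge hxy)
  rw [edist_dist, edist_dist, dist_comm, dist_eq_norm, Real.dist_eq, abs_sub_comm,
    abs_of_nonneg (sub_nonneg.2 hxy),
    ENNReal.ofReal_rpow_of_nonneg (sub_nonneg.2 hxy) r.coe_nonneg, ← ENNReal.ofReal_coe_nnreal,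
    ← ENNReal.ofReal_mul C.coe_nonneg]
  exact ENNReal.ofReal_le_ofReal (h x hx y hy hxy)

theorem lintegral_Ioo_rpow_neg_le {β a b : ℝ} (hβ0 : 0 ≤ β) (hβ1 : β < 1) (ha : 0 ≤ a)
    (hab : a ≤ b) :
    ∫⁻ t in Ioo a b, ENNReal.ofReal (t ^ (-β)) ≤
      ENNReal.ofReal ((b - a) ^ (1 - β) / (1 - β)) := by
  have hint : IntegrableOn (fun t : ℝ => t ^ (-β)) (Ioo a b) :=
    (intervalIntegrable_iff_integrableOn_Ioo_of_le hab).1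
      (intervalIntegral.intervalIntegrable_rpow' (by linarith))
  have hnonneg : 0 ≤ᵐ[volume.restrict (Ioo a b)] fun t : ℝ => t ^ (-β) :=
    ae_restrict_of_forall_mem measurableSet_Ioo fun t ht => Real.rpow_nonneg (ha.trans ht.1.le) _
  rw [← ofReal_integral_eq_lintegral_ofReal hint hnonneg, ← integral_Ioc_eq_integral_Ioo,
    ← intervalIntegral.integral_of_le hab, integral_rpow (Or.inl (by linarith)),
    neg_add_eq_sub]
  have hsub : b ^ (1 - β) ≤ a ^ (1 - β) + (b - a) ^ (1 - β) := by
    simpa using Real.rpow_add_le_add_rpow ha (sub_nonneg.2 hab) (by linarith) (by linarith)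
  gcongr
  linarith

theorem MemWLp.wNorm_ne_top {p μ : ℝ} (hp : 0 ≤ p) {I : Set ℝ} {E : Type*}
    [NormedAddCommGroup E] {f : ℝ → E} (hf : MemWLp p μ I f) : wNorm p μ I f ≠ ⊤ :=
  ENNReal.rpow_ne_top_of_nonneg (by positivity) hf.2.ne

theorem lintegral_ofReal_norm_le_wNorm_mul {p μ : ℝ} (hp : 1 < p) {E : Type*}
    [NormedAddCommGroup E] {f : ℝ → E} {I s : Set ℝ}
    (hf : AEStronglyMeasurable f (volume.restrict I)) (hs : MeasurableSet s) (hsI : s ⊆ I)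
    (hs0 : s ⊆ Ioi 0) :
    ∫⁻ t in s, ENNReal.ofReal ‖f t‖ ≤
      wNorm p μ I f *
        (∫⁻ t in s, ENNReal.ofReal (t ^ (-(p * (1 - μ) / (p - 1))))) ^ (1 - 1 / p) := by
  have hp0 : 0 < p := one_pos.trans hp
  have hpq : p.HolderConjugate (p / (p - 1)) := Real.HolderConjugate.conjExponent hp
  set α := p * (1 - μ)
  -- split `‖f t‖ = (t ^ (α / p) * ‖f t‖) * t ^ (-(α / p))` and apply Hölder's inequality
  set F : ℝ → ℝ≥0∞ := fun t => ENNReal.ofReal (t ^ (α / p) * ‖f t‖)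
  set G : ℝ → ℝ≥0∞ := fun t => ENNReal.ofReal (t ^ (-(α / p)))
  have hfs : AEStronglyMeasurable f (volume.restrict s) :=
    hf.mono_measure (Measure.restrict_mono hsI le_rfl)
  have hF : AEMeasurable F (volume.restrict s) :=
    ENNReal.measurable_ofReal.comp_aemeasurable
      ((by fun_prop : Measurable fun t : ℝ => t ^ (α / p)).aemeasurable.mul hfs.norm.aemeasurable)
  have hG : AEMeasurable G (volume.restrict s) := by fun_prop
  have hFG : ∫⁻ t in s, ENNReal.ofReal ‖f t‖ = ∫⁻ t in s, (F * G) t := by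
    refine setLIntegral_congr_fun hs fun t ht => ?_
    have ht0 : 0 < t := hs0 ht
    rw [Pi.mul_apply, ← ENNReal.ofReal_mul (by positivity), mul_right_comm, ← Real.rpow_add ht0,
      add_neg_cancel, Real.rpow_zero, one_mul]
  have hFp : ∫⁻ t in s, F t ^ p ≤ wInt p μ I f := by
    refine le_trans (le_of_eq (setLIntegral_congr_fun hs fun t ht => ?_)) (lintegral_mono_set hsI)
    have ht0 : 0 < t := hs0 ht
    rw [ENNReal.ofReal_rpow_of_nonneg (by positivity) hp0.le, Real.mul_rpow (by positivity)
      (norm_nonneg _), ← Real.rpow_mul ht0.le, div_mul_cancel₀ _ hp0.ne']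
  have hGq : ∫⁻ t in s, G t ^ (p / (p - 1)) =
      ∫⁻ t in s, ENNReal.ofReal (t ^ (-(α / (p - 1)))) := by
    refine setLIntegral_congr_fun hs fun t ht => ?_
    rw [ENNReal.ofReal_rpow_of_nonneg (Real.rpow_nonneg (hs0 ht).le _) hpq.symm.nonneg,
      ← Real.rpow_mul (hs0 ht).le]
    congr 2
    field_simp
  calc ∫⁻ t in s, ENNReal.ofReal ‖f t‖
      = ∫⁻ t in s, (F * G) t := hFG
    _ ≤ (∫⁻ t in s, F t ^ p) ^ (1 / p) *
          (∫⁻ t in s, G t ^ (p / (p - 1))) ^ (1 / (p / (p - 1))) :=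
        ENNReal.lintegral_mul_le_Lp_mul_Lq _ hpq hF hG
    _ ≤ wNorm p μ I f * (∫⁻ t in s, ENNReal.ofReal (t ^ (-(α / (p - 1))))) ^ (1 - 1 / p) := by
        have hq : 1 / (p / (p - 1)) = 1 - 1 / p := by field_simp
        rw [hGq, hq, wNorm]
        gcongr

theorem LocAC.norm_sub_le_wNorm_mul_rpow {p μ : ℝ} (hp : 1 < p) (hμ : 1 / p < μ) (hμ1 : μ ≤ 1)
    {E : Type*} [NormedAddCommGroup E] [NormedSpace ℝ E] {u u' : ℝ → E}
    (hu : LocAC (Ioi 0) u u') (hu' : MemWLp p μ (Ioi 0) u') {a b : ℝ} (ha : 0 < a)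
    (hab : a ≤ b) :
    ‖u b - u a‖ ≤
      ((p - 1) / (p * μ - 1)) ^ (1 - 1 / p) * (wNorm p μ (Ioi 0) u').toReal *
        (b - a) ^ (μ - 1 / p) := by
  have hp0 : 0 < p := one_pos.trans hp
  have hpμ : 1 < p * μ := by rwa [div_lt_iff₀ hp0, mul_comm] at hμ
  set β := p * (1 - μ) / (p - 1)
  set γ := (p * μ - 1) / (p - 1)
  have hp1 : 0 < p - 1 := by linarith
  have he : 0 ≤ 1 - 1 / p := sub_nonneg.2 ((div_le_one hp0).2 hp.le)
  have hγ : 1 - β = γ := by simp only [β, γ]; field_simp; ring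
  have hγ0 : 0 < γ := div_pos (by linarith) (by linarith)
  have hβ0 : 0 ≤ β := div_nonneg (mul_nonneg hp0.le (by linarith)) (by linarith)
  have hsub : Ioo a b ⊆ Ioi 0 := fun t ht => ha.trans ht.1
  obtain ⟨-, hFTC⟩ := hu a b ha (ha.trans_le hab) hab
  rw [hFTC]
  calc ‖∫ t in Ioo a b, u' t‖
      ≤ (∫⁻ t in Ioo a b, ENNReal.ofReal ‖u' t‖).toReal := norm_integral_le_lintegral_norm _
    _ ≤ (wNorm p μ (Ioi 0) u' * ENNReal.ofReal ((b - a) ^ γ / γ) ^ (1 - 1 / p)).toReal := by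
        refine ENNReal.toReal_mono (ENNReal.mul_ne_top (hu'.wNorm_ne_top hp0.le)
          (ENNReal.rpow_ne_top_of_nonneg he ENNReal.ofReal_ne_top)) ?_
        refine (lintegral_ofReal_norm_le_wNorm_mul (μ := μ) hp hu'.1 measurableSet_Ioo hsub
          hsub).trans ?_
        rw [← hγ]
        gcongr
        exact lintegral_Ioo_rpow_neg_le hβ0 (by linarith) ha.le hab
    _ = (wNorm p μ (Ioi 0) u').toReal * ((b - a) ^ γ / γ) ^ (1 - 1 / p) := by
        rw [ENNReal.toReal_mul, ← ENNReal.toReal_rpow, ENNReal.toReal_ofReal (by positivity)]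
    _ = _ := by
        have hexp : γ * (1 - 1 / p) = μ - 1 / p := by simp only [γ]; field_simp
        rw [show (p - 1) / (p * μ - 1) = γ⁻¹ from (inv_div _ _).symm,
          Real.inv_rpow hγ0.le, Real.div_rpow (by positivity) hγ0.le,
          ← Real.rpow_mul (by linarith), hexp]
        ring

theorem MemWLp.exists_mem_Ioo_norm_le_wNorm {p μ : ℝ} (hp : 0 < p) (hμ1 : μ ≤ 1) {E : Type*}
    [NormedAddCommGroup E] {f : ℝ → E} (hf : MemWLp p μ (Ioi 0) f) {c : ℝ} (hc : 1 ≤ c) :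
    ∃ s ∈ Ioo c (c + 1), ‖f s‖ ≤ (wNorm p μ (Ioi 0) f).toReal := by
  set g : ℝ → ℝ≥0∞ := fun t => ENNReal.ofReal (t ^ (p * (1 - μ)) * ‖f t‖ ^ p)
  have hsub : Ioo c (c + 1) ⊆ Ioi 0 := fun t ht => (one_pos.trans_le hc).trans ht.1
  have hvol : volume (Ioo c (c + 1)) = 1 := by simp [Real.volume_Ioo]
  have hg : AEMeasurable g (volume.restrict (Ioo c (c + 1))) := by
    have hfc := hf.1.mono_measure (Measure.restrict_mono hsub le_rfl)
    exact ENNReal.measurable_ofReal.comp_aemeasurable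
      ((by fun_prop : Measurable fun t : ℝ => t ^ (p * (1 - μ))).aemeasurable.mul
        (hfc.norm.aemeasurable.pow_const p))
  obtain ⟨s, hs, hgs⟩ := exists_le_setLAverage (by simp [hvol]) (by simp [hvol]) hg
  rw [setLAverage_eq, hvol, div_one] at hgs
  refine ⟨s, hs, (ENNReal.ofReal_le_iff_le_toReal (hf.wNorm_ne_top hp.le)).1 ?_⟩
  have hpow : ENNReal.ofReal ‖f s‖ ^ p ≤ wInt p μ (Ioi 0) f :=
    calc ENNReal.ofReal ‖f s‖ ^ p = ENNReal.ofReal (‖f s‖ ^ p) :=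
          ENNReal.ofReal_rpow_of_nonneg (norm_nonneg _) hp.le
      _ ≤ g s := ENNReal.ofReal_le_ofReal <| le_mul_of_one_le_left (by positivity) <|
          Real.one_le_rpow (hc.trans hs.1.le) (mul_nonneg hp.le (sub_nonneg.2 hμ1))
      _ ≤ ∫⁻ t in Ioo c (c + 1), g t := hgs
      _ ≤ wInt p μ (Ioi 0) f := lintegral_mono_set hsub
  calc ENNReal.ofReal ‖f s‖ = (ENNReal.ofReal ‖f s‖ ^ p) ^ (1 / p) := by
        rw [one_div, ENNReal.rpow_rpow_inv hp.ne']
    _ ≤ wNorm p μ (Ioi 0) f := ENNReal.rpow_le_rpow hpow (by positivity)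

theorem MemW1.norm_le_wNorm_add {p μ : ℝ} (hp : 1 < p) (hμ : 1 / p < μ) (hμ1 : μ ≤ 1) {E : Type*}
    [NormedAddCommGroup E] [NormedSpace ℝ E] {u u' : ℝ → E} (hu : MemW1 p μ (Ioi 0) u u')
    {t : ℝ} (ht : 0 < t) :
    ‖u t‖ ≤ (wNorm p μ (Ioi 0) u).toReal +
      ((p - 1) / (p * μ - 1)) ^ (1 - 1 / p) * (wNorm p μ (Ioi 0) u').toReal *
        2 ^ (μ - 1 / p) := by
  obtain ⟨s, hs, hus⟩ := hu.1.exists_mem_Ioo_norm_le_wNorm (one_pos.trans hp) hμ1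
    (le_max_right t 1)
  have hts : t ≤ s := (le_max_left t 1).trans hs.1.le
  have hst : s - t ≤ 2 := by linarith [hs.2, max_le_add_of_nonneg ht.le zero_le_one]
  calc ‖u t‖ ≤ ‖u s‖ + ‖u s - u t‖ := norm_le_insert _ _
    _ ≤ _ := by
      gcongr
      have hpμ : 0 < p * μ - 1 := by rw [div_lt_iff₀ (one_pos.trans hp)] at hμ; linarith
      refine (hu.2.2.norm_sub_le_wNorm_mul_rpow hp hμ hμ1 hu.2.1 ht hts).trans
        (mul_le_mul_of_nonneg_left ?_ (by positivity))
      exact Real.rpow_le_rpow (sub_nonneg.2 hts) hst (by linarith)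

/-- `W^1_{p,μ}((0,∞);E)` embeds continuously into `BUC([0,∞);E)`:
every `u ∈ W^1_{p,μ}` has a unique bounded uniformly continuous representative `ũ` on
`[0,∞)`, and `sup_{t ≥ 0} ‖ũ(t)‖ ≤ C (‖u‖_{L_{p,μ}} + ‖u'‖_{L_{p,μ}})` with `C = C(p,μ)`. -/
theorem stmt_15 {E : Type*} [NormedAddCommGroup E] [NormedSpace ℝ E] [CompleteSpace E]
    (p μ : ℝ) (hp : 1 < p) (hμ : 1 / p < μ) (hμ1 : μ ≤ 1) :
    ∃ C : ℝ, 0 < C ∧ ∀ u u' : ℝ → E, MemW1 p μ (Ioi 0) u u' →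
      ∃ v : ℝ → E,
        UniformContinuousOn v (Ici 0) ∧
        (∀ t ∈ Ioi (0 : ℝ), v t = u t) ∧
        (∀ t ∈ Ici (0 : ℝ), ‖v t‖
          ≤ C * ((wNorm p μ (Ioi 0) u).toReal + (wNorm p μ (Ioi 0) u').toReal)) ∧
        (∀ w : ℝ → E, ContinuousOn w (Ici 0) → (∀ t ∈ Ioi (0 : ℝ), w t = u t) →
          ∀ t ∈ Ici (0 : ℝ), w t = v t) := by
  set c := ((p - 1) / (p * μ - 1)) ^ (1 - 1 / p)
  have hc : 0 ≤ c := by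
    have : 0 < p * μ - 1 := by rw [div_lt_iff₀ (one_pos.trans hp)] at hμ; linarith
    have : 0 < p - 1 := by linarith
    positivity
  have hr : 0 < (μ - 1 / p).toNNReal := Real.toNNReal_pos.2 (sub_pos.2 hμ)
  refine ⟨1 + c * 2 ^ (μ - 1 / p), by positivity, fun u u' hu => ?_⟩
  have hholder :
      HolderOnWith (c * (wNorm p μ (Ioi 0) u').toReal).toNNReal (μ - 1 / p).toNNReal u (Ioi 0) :=
    holderOnWith_of_norm_sub_le fun a ha b _ hab => by
      rw [Real.coe_toNNReal _ (by positivity), Real.coe_toNNReal _ (sub_pos.2 hμ).le]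
      exact hu.2.2.norm_sub_le_wNorm_mul_rpow hp hμ hμ1 hu.2.1 ha hab
  obtain ⟨v, hv, hvu⟩ := hholder.exists_holderOnWith_closure_eqOn hr
  rw [closure_Ioi] at hv
  have hvc : ContinuousOn v (Ici 0) := hv.continuousOn hr
  refine ⟨v, hv.uniformContinuousOn hr, hvu, fun t ht => ?_, fun w hw hwu => ?_⟩
  · have hbound : ∀ s ∈ Ioi (0 : ℝ), ‖v s‖ ≤ (1 + c * 2 ^ (μ - 1 / p)) *
        ((wNorm p μ (Ioi 0) u).toReal + (wNorm p μ (Ioi 0) u').toReal) := fun s hs => by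
      rw [hvu hs]
      refine (hu.norm_le_wNorm_add hp hμ hμ1 hs).trans ?_
      have : 0 ≤ (wNorm p μ (Ioi 0) u).toReal := ENNReal.toReal_nonneg
      have : 0 ≤ (wNorm p μ (Ioi 0) u').toReal := ENNReal.toReal_nonneg
      nlinarith [mul_nonneg hc (by positivity : (0 : ℝ) ≤ 2 ^ (μ - 1 / p))]
    rw [← closure_Ioi] at ht hvc
    exact le_on_closure hbound hvc.norm continuousOn_const ht
  · exact EqOn.of_subset_closure (fun s hs => (hwu s hs).trans (hvu hs).symm) hw hvc
      Ioi_subset_Ici_self (closure_Ioi 0).ge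
end
end

section
/- Let E be a Banach space, μ ∈ (0,1], and let u : [0,∞) → E be continuously differentiable. Then for every σ > 0 the representation formula u(0) = (2−μ) ( σ^{−(2−μ)} ∫_0^σ τ^{1−μ} u(τ) dτ − (2−μ) ∫_0^σ t^{−(3−μ)} ∫_0^t τ^{1−μ} (u(t) − u(τ)) dτ dt ) holds, where all integrals are Bochner integrals and converge absolutely. -/
/-
Write `α = 1 - μ` and let `M(t) = (α + 1) t^{-(α+1)} ∫_0^t τ^α u(τ) dτ` be the mean of `u`
over `(0,t)` for the weight `τ^α`. Differentiating,
`M'(t) = (α + 1)² t^{-(α+2)} ∫_0^t τ^α (u(t) - u(τ)) dτ`, which is bounded on `(0,σ)` since `u`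
is Lipschitz on `[0,σ]`; and `M(t) → u(0)` as `t → 0⁺` by continuity of `u`. The formula is the
fundamental theorem of calculus `M(σ) - u(0) = ∫_0^σ M'`.
-/

open MeasureTheory Set Filter Topology
open scoped ENNReal NNReal

noncomputable section

section WeightedMean

variable {E : Type*} [NormedAddCommGroup E] [NormedSpace ℝ E] {α t : ℝ}

lemma integral_Ioo_rpow (hα : -1 < α) (ht : 0 < t) :
    ∫ τ in Ioo 0 t, τ ^ α = t ^ (α + 1) / (α + 1) := by
  rw [← integral_Ioc_eq_integral_Ioo, ← intervalIntegral.integral_of_le ht.le,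
    integral_rpow (Or.inl hα), Real.zero_rpow (by linarith), sub_zero]

lemma integrableOn_Ioo_rpow_smul (hα : -1 < α) (ht : 0 < t) {v : ℝ → E}
    (hv : ContinuousOn v (Icc 0 t)) : IntegrableOn (fun τ => τ ^ α • v τ) (Ioo 0 t) :=
  ((intervalIntegral.integrableOn_Ioo_rpow_iff ht).2 hα).smul_continuousOn_of_subset hv
    measurableSet_Ioo isCompact_Icc Ioo_subset_Icc_self

lemma norm_integral_Ioo_rpow_smul_le (hα : -1 < α) (ht : 0 < t) {v : ℝ → E} {C : ℝ}
    (hv : ∀ τ ∈ Ioo 0 t, ‖v τ‖ ≤ C) :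
    ‖∫ τ in Ioo 0 t, τ ^ α • v τ‖ ≤ t ^ (α + 1) / (α + 1) * C := by
  calc ‖∫ τ in Ioo 0 t, τ ^ α • v τ‖
      ≤ ∫ τ in Ioo 0 t, τ ^ α * C := by
        refine norm_integral_le_of_norm_le
          (((intervalIntegral.integrableOn_Ioo_rpow_iff ht).2 hα).mul_const C) ?_
        filter_upwards [ae_restrict_mem measurableSet_Ioo] with τ hτ
        rw [norm_smul, Real.norm_of_nonneg (Real.rpow_nonneg hτ.1.le _)]
        exact mul_le_mul_of_nonneg_left (hv τ hτ) (Real.rpow_nonneg hτ.1.le _)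
    _ = t ^ (α + 1) / (α + 1) * C := by rw [integral_mul_const, integral_Ioo_rpow hα ht]

def weightedMean (α : ℝ) (u : ℝ → E) (t : ℝ) : E :=
  ((α + 1) * t ^ (-(α + 1))) • ∫ τ in Ioo 0 t, τ ^ α • u τ

lemma norm_weightedMean_le (hα : -1 < α) (ht : 0 < t) {v : ℝ → E} {C : ℝ}
    (hv : ∀ τ ∈ Ioo 0 t, ‖v τ‖ ≤ C) : ‖weightedMean α v t‖ ≤ C := by
  have hα1 : 0 < α + 1 := by linarith
  calc ‖weightedMean α v t‖
      ≤ (α + 1) * t ^ (-(α + 1)) * (t ^ (α + 1) / (α + 1) * C) := by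
        rw [weightedMean, norm_smul, Real.norm_of_nonneg (by positivity)]
        gcongr
        exact norm_integral_Ioo_rpow_smul_le hα ht hv
    _ = C := by
        rw [Real.rpow_neg ht.le]
        field_simp

variable [CompleteSpace E]

lemma integral_Ioo_rpow_smul_const_sub (hα : -1 < α) (ht : 0 < t) {v : ℝ → E}
    (hv : ContinuousOn v (Icc 0 t)) (c : E) :
    ∫ τ in Ioo 0 t, τ ^ α • (c - v τ)
      = (t ^ (α + 1) / (α + 1)) • c - ∫ τ in Ioo 0 t, τ ^ α • v τ := by
  simp_rw [smul_sub]
  rw [integral_sub (integrableOn_Ioo_rpow_smul hα ht continuousOn_const)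
    (integrableOn_Ioo_rpow_smul hα ht hv), integral_smul_const, integral_Ioo_rpow hα ht]

lemma weightedMean_sub_const (hα : -1 < α) (ht : 0 < t) {v : ℝ → E}
    (hv : ContinuousOn v (Icc 0 t)) (c : E) :
    weightedMean α (fun τ => v τ - c) t = weightedMean α v t - c := by
  have hα1 : α + 1 ≠ 0 := by linarith
  have hmean : ((α + 1) * t ^ (-(α + 1))) * (t ^ (α + 1) / (α + 1)) = 1 := by
    rw [Real.rpow_neg ht.le]
    field_simp
  have hneg :
      ∫ τ in Ioo 0 t, τ ^ α • (v τ - c) = -∫ τ in Ioo 0 t, τ ^ α • (c - v τ) := by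
    rw [← integral_neg]
    simp_rw [← smul_neg, neg_sub]
  rw [weightedMean, weightedMean, hneg, integral_Ioo_rpow_smul_const_sub hα ht hv, smul_neg,
    smul_sub, smul_smul, hmean, one_smul, neg_sub]

lemma tendsto_weightedMean_nhdsGT_zero (hα : -1 < α) {u : ℝ → E}
    (hu : ContinuousOn u (Ici 0)) : Tendsto (weightedMean α u) (𝓝[>] 0) (𝓝 (u 0)) := by
  rw [Metric.tendsto_nhdsWithin_nhds]
  intro ε hε
  obtain ⟨δ, hδ, hδu⟩ :=
    Metric.continuousWithinAt_iff.1 (hu 0 self_mem_Ici) (ε / 2) (half_pos hε)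
  refine ⟨δ, hδ, fun t (ht : 0 < t) htδ => ?_⟩
  rw [Real.dist_0_eq_abs, abs_of_pos ht] at htδ
  have hclose : ∀ τ ∈ Ioo 0 t, ‖u τ - u 0‖ ≤ ε / 2 := fun τ hτ => by
    rw [← dist_eq_norm]
    refine (hδu hτ.1.le ?_).le
    rw [Real.dist_0_eq_abs, abs_of_pos hτ.1]
    exact hτ.2.trans htδ
  calc dist (weightedMean α u t) (u 0)
      = ‖weightedMean α (fun τ => u τ - u 0) t‖ := by
        rw [dist_eq_norm, weightedMean_sub_const hα ht (hu.mono Icc_subset_Ici_self)]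
    _ ≤ ε / 2 := norm_weightedMean_le hα ht hclose
    _ < ε := half_lt_self hε

lemma hasDerivAt_integral_Ioo_rpow_smul (hα : -1 < α) (ht : 0 < t) {u : ℝ → E}
    (hu : ContinuousOn u (Ici 0)) :
    HasDerivAt (fun s => ∫ τ in Ioo 0 s, τ ^ α • u τ) (t ^ α • u t) t := by
  have hcont : ContinuousOn (fun τ => τ ^ α • u τ) (Ioi 0) := fun x hx =>
    ((Real.continuousAt_rpow_const x α (Or.inl hx.ne')).smul
      (hu.continuousAt (Ici_mem_nhds hx))).continuousWithinAt
  have hG := intervalIntegral.integral_hasDerivAt_right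
    ((intervalIntegrable_iff_integrableOn_Ioo_of_le ht.le).2
      (integrableOn_Ioo_rpow_smul hα ht (hu.mono Icc_subset_Ici_self)))
    (hcont.stronglyMeasurableAtFilter isOpen_Ioi t ht) (hcont.continuousAt (Ioi_mem_nhds ht))
  refine hG.congr_of_eventuallyEq ?_
  filter_upwards [Ioi_mem_nhds ht] with s hs
  rw [intervalIntegral.integral_of_le hs.le, integral_Ioc_eq_integral_Ioo]

lemma hasDerivAt_weightedMean (hα : -1 < α) (ht : 0 < t) {u : ℝ → E}
    (hu : ContinuousOn u (Ici 0)) :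
    HasDerivAt (weightedMean α u)
      ((α + 1) ^ 2 • (t ^ (-(α + 2)) • ∫ τ in Ioo 0 t, τ ^ α • (u t - u τ))) t := by
  have hd : HasDerivAt (weightedMean α u) (((α + 1) * t ^ (-(α + 1))) • t ^ α • u t
      + ((α + 1) * (-(α + 1) * t ^ (-(α + 1) - 1))) • ∫ τ in Ioo 0 t, τ ^ α • u τ) t :=
    ((Real.hasDerivAt_rpow_const (Or.inl ht.ne')).const_mul (α + 1)).smul
      (hasDerivAt_integral_Ioo_rpow_smul hα ht hu)
  refine hd.congr_deriv ?_
  have hα1 : α + 1 ≠ 0 := by linarith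
  have hcoeff : (α + 1) ^ 2 * (t ^ (-(α + 2)) * (t ^ (α + 1) / (α + 1)))
      = (α + 1) * t ^ (-(α + 1)) * t ^ α := by
    rw [mul_assoc, ← Real.rpow_add ht, mul_div_assoc', mul_div_assoc', ← Real.rpow_add ht]
    field_simp
    ring_nf
  rw [integral_Ioo_rpow_smul_const_sub hα ht (hu.mono Icc_subset_Ici_self),
    show -(α + 1) - 1 = -(α + 2) by ring]
  simp only [smul_sub, smul_smul, hcoeff]
  module

lemma integrableOn_rpow_smul_integral_sub (hα : -1 < α) {u : ℝ → E}
    (hu : ContinuousOn u (Ici 0)) {σ : ℝ} {K : ℝ≥0} (hK : LipschitzOnWith K u (Icc 0 σ)) :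
    IntegrableOn (fun t => t ^ (-(α + 2)) • ∫ τ in Ioo 0 t, τ ^ α • (u t - u τ))
      (Ioo 0 σ) := by
  have hα1 : 0 < α + 1 := by linarith
  have hmeas : AEStronglyMeasurable
      (fun t => t ^ (-(α + 2)) • ∫ τ in Ioo 0 t, τ ^ α • (u t - u τ))
      (volume.restrict (Ioo 0 σ)) := by
    -- up to a constant factor this is the derivative of `weightedMean α u`,
    -- and derivatives are measurable
    refine ((aestronglyMeasurable_deriv (weightedMean α u) _).const_smul
      ((α + 1) ^ 2)⁻¹).congr ?_
    filter_upwards [ae_restrict_mem measurableSet_Ioo] with t ht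
    rw [Pi.smul_apply, (hasDerivAt_weightedMean hα ht.1 hu).deriv, smul_smul,
      inv_mul_cancel₀ (by positivity), one_smul]
  refine IntegrableOn.of_bound measure_Ioo_lt_top hmeas (K / (α + 1)) ?_
  filter_upwards [ae_restrict_mem measurableSet_Ioo] with t ht
  have hlip : ∀ τ ∈ Ioo 0 t, ‖u t - u τ‖ ≤ K * t := fun τ hτ => by
    refine (lipschitzOnWith_iff_norm_sub_le.1 hK ⟨ht.1.le, ht.2.le⟩
      ⟨hτ.1.le, (hτ.2.trans ht.2).le⟩).trans ?_
    rw [Real.norm_of_nonneg (by linarith [hτ.2])]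
    exact mul_le_mul_of_nonneg_left (by linarith [hτ.1]) K.coe_nonneg
  calc ‖t ^ (-(α + 2)) • ∫ τ in Ioo 0 t, τ ^ α • (u t - u τ)‖
      ≤ t ^ (-(α + 2)) * (t ^ (α + 1) / (α + 1) * (K * t)) := by
        rw [norm_smul, Real.norm_of_nonneg (Real.rpow_nonneg ht.1.le _)]
        exact mul_le_mul_of_nonneg_left (norm_integral_Ioo_rpow_smul_le hα ht.1 hlip)
          (Real.rpow_nonneg ht.1.le _)
    _ = K / (α + 1) := by
        rw [show -(α + 2) = -(α + 1) - 1 by ring, Real.rpow_sub_one ht.1.ne',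
          Real.rpow_neg ht.1.le]
        have ht0 : t ≠ 0 := ht.1.ne'
        have htα : t ^ (α + 1) ≠ 0 := (Real.rpow_pos_of_pos ht.1 _).ne'
        field_simp

lemma weightedMean_sub_apply_zero (hα : -1 < α) {u : ℝ → E} (hu : ContinuousOn u (Ici 0))
    {σ : ℝ} {K : ℝ≥0} (hK : LipschitzOnWith K u (Icc 0 σ)) (hσ : 0 < σ) :
    weightedMean α u σ - u 0
      = (α + 1) ^ 2 •
          ∫ t in Ioo 0 σ, t ^ (-(α + 2)) • ∫ τ in Ioo 0 t, τ ^ α • (u t - u τ) := by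
  have hFTC := intervalIntegral.integral_eq_sub_of_hasDerivAt_of_tendsto hσ
    (fun t ht => hasDerivAt_weightedMean hα ht.1 hu)
    ((intervalIntegrable_iff_integrableOn_Ioo_of_le hσ.le).2
      ((integrableOn_rpow_smul_integral_sub hα hu hK).smul ((α + 1) ^ 2)))
    (tendsto_weightedMean_nhdsGT_zero hα hu)
    (hasDerivAt_weightedMean hα hσ hu).continuousAt.continuousWithinAt.tendsto
  rw [intervalIntegral.integral_of_le hσ.le, integral_Ioc_eq_integral_Ioo, integral_smul] at hFTC
  exact hFTC.symm

end WeightedMean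

theorem stmt_17_general {E : Type*} [NormedAddCommGroup E] [NormedSpace ℝ E] [CompleteSpace E]
    (μ : ℝ) (hμ1 : μ ≤ 1)
    (u : ℝ → E) (hu : ContDiffOn ℝ 1 u (Ici 0))
    (σ : ℝ) (hσ : 0 < σ) :
    IntegrableOn (fun τ => (τ ^ (1 - μ)) • u τ) (Ioo 0 σ) ∧
    (∀ t ∈ Ioo (0 : ℝ) σ,
      IntegrableOn (fun τ => (τ ^ (1 - μ)) • (u t - u τ)) (Ioo 0 t)) ∧
    IntegrableOn
      (fun t => (t ^ (-(3 - μ))) • ∫ τ in Ioo (0 : ℝ) t, (τ ^ (1 - μ)) • (u t - u τ))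
      (Ioo 0 σ) ∧
    u 0 = (2 - μ) •
      ((σ ^ (-(2 - μ))) • (∫ τ in Ioo (0 : ℝ) σ, (τ ^ (1 - μ)) • u τ)
        - (2 - μ) •
          ∫ t in Ioo (0 : ℝ) σ,
            (t ^ (-(3 - μ))) • ∫ τ in Ioo (0 : ℝ) t, (τ ^ (1 - μ)) • (u t - u τ)) := by
  have hα : -1 < 1 - μ := by linarith
  have hcont : ContinuousOn u (Ici 0) := hu.continuousOn
  obtain ⟨K, hK⟩ := (hu.mono Icc_subset_Ici_self).exists_lipschitzOnWith one_ne_zero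
    (convex_Icc 0 σ) isCompact_Icc
  have hint := integrableOn_rpow_smul_integral_sub hα hcont hK
  have hrep := weightedMean_sub_apply_zero hα hcont hK hσ
  rw [show 1 - μ + 2 = 3 - μ by ring] at hint hrep
  rw [weightedMean, show 1 - μ + 1 = 2 - μ by ring] at hrep
  refine ⟨integrableOn_Ioo_rpow_smul hα hσ (hcont.mono Icc_subset_Ici_self),
    fun t ht => integrableOn_Ioo_rpow_smul hα ht.1 (continuousOn_const.sub
      (hcont.mono Icc_subset_Ici_self)), hint, ?_⟩
  linear_combination (norm := module) -hrep

/-- Representation formula for the initial value: for `u : [0,∞) → E`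
continuously differentiable, `μ ∈ (0,1]` and `σ > 0`,
`u(0) = (2-μ) ( σ^{-(2-μ)} ∫_0^σ τ^{1-μ} u(τ) dτ
        - (2-μ) ∫_0^σ t^{-(3-μ)} ∫_0^t τ^{1-μ} (u(t)-u(τ)) dτ dt )`,
where all integrals are Bochner integrals converging absolutely. -/
theorem stmt_17 {E : Type*} [NormedAddCommGroup E] [NormedSpace ℝ E] [CompleteSpace E]
    (μ : ℝ) (hμ0 : 0 < μ) (hμ1 : μ ≤ 1)
    (u : ℝ → E) (hu : ContDiffOn ℝ 1 u (Ici 0))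
    (σ : ℝ) (hσ : 0 < σ) :
    IntegrableOn (fun τ => (τ ^ (1 - μ)) • u τ) (Ioo 0 σ) ∧
    (∀ t ∈ Ioo (0 : ℝ) σ,
      IntegrableOn (fun τ => (τ ^ (1 - μ)) • (u t - u τ)) (Ioo 0 t)) ∧
    IntegrableOn
      (fun t => (t ^ (-(3 - μ))) • ∫ τ in Ioo (0 : ℝ) t, (τ ^ (1 - μ)) • (u t - u τ))
      (Ioo 0 σ) ∧
    u 0 = (2 - μ) •
      ((σ ^ (-(2 - μ))) • (∫ τ in Ioo (0 : ℝ) σ, (τ ^ (1 - μ)) • u τ)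
        - (2 - μ) •
          ∫ t in Ioo (0 : ℝ) σ,
            (t ^ (-(3 - μ))) • ∫ τ in Ioo (0 : ℝ) t, (τ ^ (1 - μ)) • (u t - u τ)) :=
  stmt_17_general μ hμ1 u hu σ hσ
end
end
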